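/- arXiv:1909.07878 — 7 statements merged into one kernel-verified Lean document; each statement's English description precedes it below -/
import Mathlib

section
/- For every integer n ≥ 7, the complete graph K_n satisfies fmp(K_n) = n − 1. -/
open Finset

variable {V : Type*}

/-- A fractional perfect matching of a finite simple graph. -/
def SimpleGraph.IsFracPerfectMatching [Fintype V] [DecidableEq V]
    (G : SimpleGraph V) (f : Sym2 V → ℝ) : Prop :=
  (∀ e, 0 ≤ f e ∧ f e ≤ 1) ∧ (∀ e, e ∉ G.edgeSet → f e = 0) ∧
    ∀ v : V, ∑ e ∈ Finset.univ.filter (fun e : Sym2 V => v ∈ e), f e = 1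

/-- `G` has a fractional perfect matching. -/
def SimpleGraph.HasFPM [Fintype V] [DecidableEq V] (G : SimpleGraph V) : Prop :=
  ∃ f, G.IsFracPerfectMatching f

/-- The fractional matching preclusion number of `G`. -/
noncomputable def SimpleGraph.fmp [Fintype V] [DecidableEq V] (G : SimpleGraph V) : ℕ :=
  sInf {k | ∃ F : Finset (Sym2 V), ↑F ⊆ G.edgeSet ∧ F.card = k ∧
    ¬ (G.deleteEdges ↑F).HasFPM}

/-- The minimum degree of `G`. -/
noncomputable def SimpleGraph.minDeg [Fintype V] (G : SimpleGraph V) : ℕ :=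
  sInf {d | ∃ v : V, (G.neighborSet v).ncard = d}

/-- A graph contains a Hamiltonian cycle. -/
def SimpleGraph.IsHamil {W : Type*} [DecidableEq W] (G : SimpleGraph W) : Prop :=
  ∃ (a : W) (p : G.Walk a a), p.IsHamiltonianCycle

/-- The induced subgraph on `A` is a `K₂`. -/
def SimpleGraph.IsK2Part [DecidableEq V] (G : SimpleGraph V) (A : Finset V) : Prop :=
  ∃ u v : V, A = {u, v} ∧ G.Adj u v

section FmpAux

lemma arith_key (n x y c : ℕ) (hn : 7 ≤ n) (ha : 1 ≤ x + c) (hb : 1 ≤ y + c)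
    (hab : n + 1 ≤ x + y + 2*c) (han : x + c ≤ n) (hbn : y + c ≤ n) :
    2*(n-1) ≤ 2*(x*(y+c)) + 2*(c*y) + (c*c - c) := by
  have h1 : 1 ≤ n := by omega
  have hcc : c ≤ c*c := by
    rcases Nat.eq_zero_or_pos c with rfl|h
    · simp
    · exact Nat.le_mul_of_pos_left c h
  zify [hcc, h1] at *
  have hx : (0:ℤ) ≤ x := Int.ofNat_nonneg x
  have hy : (0:ℤ) ≤ y := Int.ofNat_nonneg y
  have hc : (0:ℤ) ≤ c := Int.ofNat_nonneg c
  nlinarith [mul_nonneg hx hy, mul_nonneg hx hc, mul_nonneg hy hc,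
    sq_nonneg ((x:ℤ)+y+2*c-n-1), mul_nonneg (mul_nonneg hx hy) hc, sq_nonneg ((x:ℤ)-y),
    mul_nonneg hx (sub_nonneg.2 ha), mul_nonneg hy (sub_nonneg.2 hb),
    mul_nonneg (sub_nonneg.2 ha) (sub_nonneg.2 hb)]

lemma hall_cond (n : ℕ) (hn : 7 ≤ n) (F : Finset (Sym2 (Fin n))) (hFc : F.card ≤ n - 2)
    (A : Finset (Fin n)) :
    A.card ≤ (A.biUnion (fun v => univ.filter (fun w => v ≠ w ∧ s(v,w) ∉ F))).card := by
  by_contra hlt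
  push_neg at hlt
  set N := A.biUnion (fun v => univ.filter (fun w => v ≠ w ∧ s(v,w) ∉ F)) with hN
  set B : Finset (Fin n) := univ \ N with hBdef
  set C : Finset (Fin n) := A ∩ B with hCdef
  have hCA : C ⊆ A := inter_subset_left
  have hCB : C ⊆ B := inter_subset_right
  -- key: cross pairs are in F
  have key : ∀ v ∈ A, ∀ w ∈ B, v ≠ w → s(v,w) ∈ F := by
    intro v hv w hw hvw
    by_contra hnot
    have : w ∈ N := mem_biUnion.2 ⟨v, hv, mem_filter.2 ⟨mem_univ _, hvw, hnot⟩⟩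
    rw [hBdef] at hw
    exact (mem_sdiff.1 hw).2 this
  set P₁ : Finset (Sym2 (Fin n)) := ((A \ B) ×ˢ B).image Sym2.mk.uncurry with hP1
  set P₂ : Finset (Sym2 (Fin n)) := (C ×ˢ (B \ C)).image Sym2.mk.uncurry with hP2
  set P₃ : Finset (Sym2 (Fin n)) := C.offDiag.image Sym2.mk.uncurry with hP3
  have hsub : P₁ ∪ P₂ ∪ P₃ ⊆ F := by
    intro e he
    rcases mem_union.1 he with he | he
    · rcases mem_union.1 he with he | he
      · obtain ⟨⟨v, w⟩, hp, rfl⟩ := mem_image.1 he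
        obtain ⟨hv, hw⟩ := mem_product.1 hp
        exact key v (mem_sdiff.1 hv).1 w hw (fun h => (mem_sdiff.1 hv).2 (h ▸ hw))
      · obtain ⟨⟨v, w⟩, hp, rfl⟩ := mem_image.1 he
        obtain ⟨hv, hw⟩ := mem_product.1 hp
        exact key v (hCA hv) w (mem_sdiff.1 hw).1 (fun h => (mem_sdiff.1 hw).2 (h ▸ hv))
    · obtain ⟨⟨v, w⟩, hp, rfl⟩ := mem_image.1 he
      obtain ⟨hv, hw, hvw⟩ := mem_offDiag.1 hp
      exact key v (hCA hv) w (hCB hw) hvw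
  -- endpoints facts
  have memB₂ : ∀ e ∈ P₂, ∀ x ∈ e, x ∈ B := by
    intro e he x hx
    obtain ⟨⟨v, w⟩, hp, rfl⟩ := mem_image.1 he
    obtain ⟨hv, hw⟩ := mem_product.1 hp
    rcases Sym2.mem_iff.1 hx with rfl | rfl
    · exact hCB hv
    · exact (mem_sdiff.1 hw).1
  have memB₃ : ∀ e ∈ P₃, ∀ x ∈ e, x ∈ B := by
    intro e he x hx
    obtain ⟨⟨v, w⟩, hp, rfl⟩ := mem_image.1 he
    obtain ⟨hv, hw, _⟩ := mem_offDiag.1 hp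
    rcases Sym2.mem_iff.1 hx with rfl | rfl
    · exact hCB hv
    · exact hCB hw
  have hd1 : Disjoint P₁ (P₂ ∪ P₃) := by
    rw [disjoint_left]
    intro e he1 he23
    obtain ⟨⟨v, w⟩, hp, rfl⟩ := mem_image.1 he1
    obtain ⟨hv, hw⟩ := mem_product.1 hp
    have hvB : v ∈ B := by
      rcases mem_union.1 he23 with h | h
      · exact memB₂ _ h v (Sym2.mem_mk_left v w)
      · exact memB₃ _ h v (Sym2.mem_mk_left v w)
    exact (mem_sdiff.1 hv).2 hvB
  have hd2 : Disjoint P₂ P₃ := by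
    rw [disjoint_left]
    intro e he2 he3
    obtain ⟨⟨v, w⟩, hp, rfl⟩ := mem_image.1 he2
    obtain ⟨hv, hw⟩ := mem_product.1 hp
    have : w ∈ C := by
      obtain ⟨⟨v', w'⟩, hp', he⟩ := mem_image.1 he3
      obtain ⟨hv', hw', _⟩ := mem_offDiag.1 hp'
      have : w ∈ Function.uncurry Sym2.mk (v, w) := Sym2.mem_mk_right v w
      rw [← he] at this
      rcases Sym2.mem_iff.1 this with rfl | rfl
      · exact hv'
      · exact hw'
    exact (mem_sdiff.1 hw).2 this
  -- cardinalities
  have hc1 : P₁.card = (A \ B).card * B.card := by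
    rw [hP1, card_image_of_injOn, card_product]
    rintro ⟨v, w⟩ hp ⟨v', w'⟩ hp' h
    simp only [coe_product, Set.mem_prod, mem_coe] at hp hp'
    rcases Sym2.eq_iff.1 h with ⟨rfl, rfl⟩ | ⟨rfl, rfl⟩
    · rfl
    · exact absurd hp'.2 (fun hh => (mem_sdiff.1 hp.1).2 hh)
  have hc2 : P₂.card = C.card * (B \ C).card := by
    rw [hP2, card_image_of_injOn, card_product]
    rintro ⟨v, w⟩ hp ⟨v', w'⟩ hp' h
    simp only [coe_product, Set.mem_prod, mem_coe] at hp hp'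
    rcases Sym2.eq_iff.1 h with ⟨rfl, rfl⟩ | ⟨rfl, rfl⟩
    · rfl
    · exact absurd hp'.1 (mem_sdiff.1 hp.2).2
  have hc3 : 2 * P₃.card = C.card * C.card - C.card := by
    rw [hP3, Sym2.two_mul_card_image_offDiag, offDiag_card]
  -- apply arithmetic
  have hxA : (A \ B).card + C.card = A.card := by
    rw [hCdef]
    exact card_sdiff_add_card_inter A B
  have hyB : (B \ C).card + C.card = B.card := by
    have h1 : C.card ≤ B.card := card_le_card hCB
    have h2 := card_sdiff_of_subset hCB
    omega
  have hBn : B.card = n - N.card := by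
    rw [hBdef, card_sdiff_of_subset (subset_univ _), card_univ, Fintype.card_fin]
  have hNn : N.card ≤ n := by
    have := card_le_card (subset_univ N)
    rwa [card_univ, Fintype.card_fin] at this
  have hAn : A.card ≤ n := by
    have := card_le_card (subset_univ A)
    rwa [card_univ, Fintype.card_fin] at this
  have hUcard : P₁.card + P₂.card + P₃.card ≤ F.card := by
    have h1 : (P₁ ∪ P₂ ∪ P₃).card ≤ F.card := card_le_card hsub
    rw [union_assoc, card_union_of_disjoint hd1, card_union_of_disjoint hd2] at h1
    omega
  have harith := arith_key n (A \ B).card (B \ C).card C.card hn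
    (by omega) (by omega) (by omega) (by omega) (by omega)
  rw [show (B \ C).card + C.card = B.card from hyB] at harith
  omega

lemma hasFPM_of_inj {n : ℕ} (G : SimpleGraph (Fin n)) (σ : Fin n → Fin n)
    (hinj : Function.Injective σ) (hadj : ∀ v, G.Adj v (σ v)) : G.HasFPM := by
  have hbij : Function.Bijective σ := Finite.injective_iff_bijective.1 hinj
  set τ : Equiv.Perm (Fin n) := Equiv.ofBijective σ hbij with hτ
  have hτa : ∀ u, τ u = σ u := fun u => rfl
  refine ⟨fun e => ((univ.filter (fun u => s(u, σ u) = e)).card : ℝ) / 2, ?_, ?_, ?_⟩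
  · intro e
    constructor
    · positivity
    · rw [div_le_one (by norm_num)]
      have h2 : (univ.filter (fun u => s(u, σ u) = e)).card ≤ 2 := by
        induction e using Sym2.ind with
        | _ a b =>
          have hsub : univ.filter (fun u => s(u, σ u) = s(a, b)) ⊆ {a, b} := by
            intro u hu
            have := (mem_filter.1 hu).2
            rcases Sym2.eq_iff.1 this with ⟨rfl, _⟩ | ⟨rfl, _⟩
            · exact mem_insert_self _ _
            · exact mem_insert_of_mem (mem_singleton_self _)
          refine (card_le_card hsub).trans ?_
          exact (card_insert_le a {b}).trans (by simp)
      exact_mod_cast h2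
  · intro e he
    have : univ.filter (fun u => s(u, σ u) = e) = ∅ := by
      rw [filter_eq_empty_iff]
      intro u _ heq
      exact he (heq ▸ (G.mem_edgeSet.2 (hadj u)))
    simp [this]
  · intro v
    set s : Finset (Fin n) := univ.filter (fun u => v ∈ s(u, σ u)) with hs
    set t : Finset (Sym2 (Fin n)) := univ.filter (fun e : Sym2 (Fin n) => v ∈ e) with ht
    have hmaps : ∀ u ∈ s, s(u, σ u) ∈ t := by
      intro u hu
      exact mem_filter.2 ⟨mem_univ _, (mem_filter.1 hu).2⟩
    have hcard := Finset.card_eq_sum_card_fiberwise hmaps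
    have hfib : ∀ e ∈ t, (s.filter fun u => s(u, σ u) = e) =
        univ.filter (fun u => s(u, σ u) = e) := by
      intro e he
      ext u
      simp only [hs, mem_filter, mem_univ, true_and, and_iff_right_iff_imp]
      intro heq
      exact heq ▸ (mem_filter.1 he).2
    have hscard : s.card = 2 := by
      have hset : s = {v, τ.symm v} := by
        ext u
        simp only [hs, mem_filter, mem_univ, true_and, Sym2.mem_iff, mem_insert, mem_singleton]
        constructor
        · rintro (rfl | h)
          · exact Or.inl rfl
          · right
            rw [h, ← hτa, Equiv.symm_apply_apply]
        · rintro (rfl | rfl)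
          · exact Or.inl rfl
          · right
            rw [← hτa, Equiv.apply_symm_apply]
      have hne : τ.symm v ≠ v := by
        have := hadj (τ.symm v)
        rw [← hτa, Equiv.apply_symm_apply] at this
        exact this.ne
      rw [hset, card_insert_of_notMem (by simpa using Ne.symm hne), card_singleton]
    calc ∑ e ∈ t, ((univ.filter (fun u => s(u, σ u) = e)).card : ℝ) / 2
        = (∑ e ∈ t, ((s.filter fun u => s(u, σ u) = e).card : ℝ)) / 2 := by
          rw [Finset.sum_div]
          exact Finset.sum_congr rfl (fun e he => by rw [hfib e he])
      _ = ((s.card : ℝ)) / 2 := by rw [hcard]; push_cast; ring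
      _ = 1 := by rw [hscard]; norm_num

end FmpAux

theorem fmp_completeGraph (n : ℕ) (hn : 7 ≤ n) :
    (⊤ : SimpleGraph (Fin n)).fmp = n - 1 := by
  have hmem : (n - 1) ∈ {k | ∃ F : Finset (Sym2 (Fin n)),
      ↑F ⊆ (⊤ : SimpleGraph (Fin n)).edgeSet ∧ F.card = k ∧
      ¬ ((⊤ : SimpleGraph (Fin n)).deleteEdges ↑F).HasFPM} := by
    have hpos : 0 < n := by omega
    set z : Fin n := ⟨0, hpos⟩ with hz
    refine ⟨(univ.erase z).image (fun w => s(z, w)), ?_, ?_, ?_⟩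
    · intro e he
      obtain ⟨w, hw, rfl⟩ := mem_image.1 he
      exact (⊤ : SimpleGraph (Fin n)).mem_edgeSet.2 (by simpa using (ne_of_mem_erase hw).symm)
    · rw [card_image_of_injOn, card_erase_of_mem (mem_univ _), card_univ, Fintype.card_fin]
      intro w hw w' hw' h
      rcases Sym2.eq_iff.1 h with ⟨_, h2⟩ | ⟨h1, h2⟩
      · exact h2
      · exact absurd h1.symm (ne_of_mem_erase (Finset.mem_coe.1 hw'))
    · rintro ⟨f, _, hvan, hsum⟩
      have h0 := hsum z
      rw [Finset.sum_eq_zero] at h0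
      · exact one_ne_zero h0.symm
      · intro e he
        have h0e : z ∈ e := (mem_filter.1 he).2
        obtain ⟨w, rfl⟩ := Sym2.mem_iff_exists.1 h0e
        apply hvan
        rw [SimpleGraph.mem_edgeSet, SimpleGraph.deleteEdges_adj]
        rintro ⟨hadj, hnF⟩
        apply hnF
        simp only [Finset.coe_image, Set.mem_image, mem_coe]
        exact ⟨w, mem_erase.2 ⟨hadj.ne', mem_univ _⟩, rfl⟩
  refine le_antisymm (Nat.sInf_le hmem) (le_csInf ⟨_, hmem⟩ ?_)
  rintro k ⟨F, hFsub, rfl, hnFPM⟩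
  by_contra hlt
  push_neg at hlt
  have hFc : F.card ≤ n - 2 := by omega
  obtain ⟨σ, hinj, hσ⟩ := (Finset.all_card_le_biUnion_card_iff_exists_injective
    (fun v : Fin n => univ.filter (fun w => v ≠ w ∧ s(v,w) ∉ F))).1
    (fun A => hall_cond n hn F hFc A)
  apply hnFPM
  apply hasFPM_of_inj _ σ hinj
  intro v
  obtain ⟨-, hne, hnF⟩ := mem_filter.1 (hσ v)
  rw [SimpleGraph.deleteEdges_adj]
  exact ⟨by simpa using hne, by simpa using hnF⟩
end

section
/- A finite simple graph G has a fractional perfect matching if and only if for every subset S ⊆ V(G), the number of isolated vertices of the graph G − S (the induced subgraph on V(G) \ S) is at most |S|. -/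
open Finset

variable {V : Type*}

theorem hasFPM_iff_isolated [Fintype V] [DecidableEq V] (G : SimpleGraph V) :
    G.HasFPM ↔ ∀ S : Finset V,
      {v : V | v ∉ S ∧ ∀ u : V, G.Adj v u → u ∈ S}.ncard ≤ S.card := by
  classical
  haveI : DecidableRel G.Adj := Classical.decRel _
  constructor
  · rintro ⟨f, hf01, hf0, hfsum⟩ S
    set I : Finset V := univ.filter (fun v => v ∉ S ∧ ∀ u : V, G.Adj v u → u ∈ S) with hIdef
    have hIset : {v : V | v ∉ S ∧ ∀ u : V, G.Adj v u → u ∈ S} = (I : Set V) := by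
      ext v; simp [hIdef]
    rw [hIset, Set.ncard_coe_finset]
    have key : (I.card : ℝ) ≤ (S.card : ℝ) := by
      have hL : ∑ e : Sym2 V, ∑ w ∈ I, (if w ∈ e then f e else 0) = (I.card : ℝ) := by
        rw [Finset.sum_comm]
        calc ∑ w ∈ I, ∑ e : Sym2 V, (if w ∈ e then f e else 0)
            = ∑ w ∈ I, (1 : ℝ) :=
              Finset.sum_congr rfl (fun w _ => by rw [← Finset.sum_filter]; exact hfsum w)
          _ = (I.card : ℝ) := by simp
      have hR : ∑ e : Sym2 V, ∑ v ∈ S, (if v ∈ e then f e else 0) = (S.card : ℝ) := by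
        rw [Finset.sum_comm]
        calc ∑ v ∈ S, ∑ e : Sym2 V, (if v ∈ e then f e else 0)
            = ∑ v ∈ S, (1 : ℝ) :=
              Finset.sum_congr rfl (fun v _ => by rw [← Finset.sum_filter]; exact hfsum v)
          _ = (S.card : ℝ) := by simp
      rw [← hL, ← hR]
      apply Finset.sum_le_sum
      intro e _
      induction e using Sym2.ind with
      | _ a b =>
        rw [← Finset.sum_filter, ← Finset.sum_filter, Finset.sum_const, Finset.sum_const,
          nsmul_eq_mul, nsmul_eq_mul]
        by_cases h0 : f s(a, b) = 0
        · simp [h0]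
        have hpos : (0 : ℝ) ≤ f s(a, b) := (hf01 _).1
        have hab : G.Adj a b := by
          rw [← SimpleGraph.mem_edgeSet]
          by_contra h
          exact h0 (hf0 _ h)
        have hc : (I.filter (fun w => w ∈ s(a, b))).card ≤
            (S.filter (fun w => w ∈ s(a, b))).card := by
          by_cases haI : a ∈ I
          · have haP := (Finset.mem_filter.mp haI).2
            have hbS : b ∈ S := haP.2 b hab
            have hbI : b ∉ I := fun h => ((Finset.mem_filter.mp h).2).1 hbS
            have hIf : I.filter (fun w => w ∈ s(a, b)) = {a} := by
              ext w
              simp only [Finset.mem_filter, Sym2.mem_iff, Finset.mem_singleton]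
              constructor
              · rintro ⟨hw, rfl | rfl⟩
                · rfl
                · exact absurd hw hbI
              · rintro rfl; exact ⟨haI, Or.inl rfl⟩
            rw [hIf, Finset.card_singleton]
            exact Finset.card_pos.mpr ⟨b, Finset.mem_filter.mpr ⟨hbS, by simp⟩⟩
          · by_cases hbI : b ∈ I
            · have hbP := (Finset.mem_filter.mp hbI).2
              have haS : a ∈ S := hbP.2 a hab.symm
              have hIf : I.filter (fun w => w ∈ s(a, b)) = {b} := by
                ext w
                simp only [Finset.mem_filter, Sym2.mem_iff, Finset.mem_singleton]
                constructor
                · rintro ⟨hw, rfl | rfl⟩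
                  · exact absurd hw haI
                  · rfl
                · rintro rfl; exact ⟨hbI, Or.inr rfl⟩
              rw [hIf, Finset.card_singleton]
              exact Finset.card_pos.mpr ⟨a, Finset.mem_filter.mpr ⟨haS, by simp⟩⟩
            · have hIf : I.filter (fun w => w ∈ s(a, b)) = ∅ := by
                ext w
                simp only [Finset.mem_filter, Sym2.mem_iff, Finset.notMem_empty, iff_false,
                  not_and]
                rintro hw (rfl | rfl)
                · exact absurd hw haI
                · exact absurd hw hbI
              rw [hIf]
              simp
        exact mul_le_mul_of_nonneg_right (by exact_mod_cast hc) hpos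
    exact_mod_cast key
  · intro hcond
    have hall : ∀ X : Finset V, X.card ≤ (X.biUnion (fun x => G.neighborFinset x)).card := by
      intro X
      set N := X.biUnion (fun x => G.neighborFinset x) with hN
      set Y := X \ N with hY
      set S := Y.biUnion (fun x => G.neighborFinset x) with hS
      have hYI : (Y : Set V) ⊆ {v : V | v ∉ S ∧ ∀ u : V, G.Adj v u → u ∈ S} := by
        intro v hv
        have hvY : v ∈ Y := hv
        have hvX : v ∈ X := (Finset.mem_sdiff.mp hvY).1
        have hvN : v ∉ N := (Finset.mem_sdiff.mp hvY).2
        constructor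
        · intro hvS
          obtain ⟨u, huY, hvu⟩ := Finset.mem_biUnion.mp hvS
          have hadj : G.Adj u v := (SimpleGraph.mem_neighborFinset G u v).mp hvu
          have huX : u ∈ X := (Finset.mem_sdiff.mp huY).1
          exact hvN (Finset.mem_biUnion.mpr
            ⟨u, huX, (SimpleGraph.mem_neighborFinset G u v).mpr hadj⟩)
        · intro u hadj
          exact Finset.mem_biUnion.mpr ⟨v, hvY, (SimpleGraph.mem_neighborFinset G v u).mpr hadj⟩
      have h1 : Y.card ≤ S.card := by
        calc Y.card = (Y : Set V).ncard := (Set.ncard_coe_finset Y).symm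
          _ ≤ {v : V | v ∉ S ∧ ∀ u : V, G.Adj v u → u ∈ S}.ncard :=
              Set.ncard_le_ncard hYI (Set.toFinite _)
          _ ≤ S.card := hcond S
      have hSsub : S ⊆ N \ X := by
        intro v hvS
        obtain ⟨u, huY, hvu⟩ := Finset.mem_biUnion.mp hvS
        have hadj : G.Adj u v := (SimpleGraph.mem_neighborFinset G u v).mp hvu
        have huX : u ∈ X := (Finset.mem_sdiff.mp huY).1
        have huN : u ∉ N := (Finset.mem_sdiff.mp huY).2
        refine Finset.mem_sdiff.mpr
          ⟨Finset.mem_biUnion.mpr ⟨u, huX, (SimpleGraph.mem_neighborFinset G u v).mpr hadj⟩, ?_⟩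
        intro hvX
        exact huN (Finset.mem_biUnion.mpr
          ⟨v, hvX, (SimpleGraph.mem_neighborFinset G v u).mpr hadj.symm⟩)
      have h2 : S.card ≤ (N \ X).card := Finset.card_le_card hSsub
      have h3 : (X \ N).card + (X ∩ N).card = X.card := Finset.card_sdiff_add_card_inter X N
      have h4 : (N \ X).card + (N ∩ X).card = N.card := Finset.card_sdiff_add_card_inter N X
      have h5 : (X ∩ N).card ≤ N.card := Finset.card_le_card (Finset.inter_subset_right)
      have h6 : (X ∩ N).card = (N ∩ X).card := by rw [Finset.inter_comm]
      rw [hY] at h1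
      omega
    obtain ⟨f, finj, hfmem⟩ :=
      (Finset.all_card_le_biUnion_card_iff_exists_injective (fun x => G.neighborFinset x)).mp hall
    have hadj : ∀ x, G.Adj x (f x) :=
      fun x => (SimpleGraph.mem_neighborFinset G x (f x)).mp (hfmem x)
    refine ⟨fun e => ((univ.filter (fun x => s(x, f x) = e)).card : ℝ) / 2, ?_, ?_, ?_⟩
    · intro e
      refine ⟨by positivity, ?_⟩
      have hcard : (univ.filter (fun x => s(x, f x) = e)).card ≤ 2 := by
        rcases (univ.filter (fun x => s(x, f x) = e)).eq_empty_or_nonempty with h | ⟨x0, hx0⟩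
        · simp [h]
        · have hx0e : s(x0, f x0) = e := (Finset.mem_filter.mp hx0).2
          have hsub : univ.filter (fun x => s(x, f x) = e) ⊆ {x0, f x0} := by
            intro x hx
            have hxe : s(x, f x) = e := (Finset.mem_filter.mp hx).2
            rcases Sym2.eq_iff.mp (hxe.trans hx0e.symm) with ⟨h1, _⟩ | ⟨h1, _⟩ <;> simp [h1]
          calc (univ.filter (fun x => s(x, f x) = e)).card
              ≤ ({x0, f x0} : Finset V).card := Finset.card_le_card hsub
            _ ≤ ({f x0} : Finset V).card + 1 := Finset.card_insert_le _ _
            _ = 2 := by simp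
      rw [div_le_one (by norm_num)]
      exact_mod_cast hcard
    · intro e he
      have hemp : univ.filter (fun x => s(x, f x) = e) = ∅ := by
        ext x
        simp only [Finset.mem_filter, Finset.mem_univ, true_and, Finset.notMem_empty, iff_false]
        intro hxe
        exact he (hxe ▸ (SimpleGraph.mem_edgeSet G).mpr (hadj x))
      simp [hemp]
    · intro v
      have hg : ∀ e : Sym2 V, ((univ.filter (fun x => s(x, f x) = e)).card : ℝ) / 2
          = ∑ x : V, (if s(x, f x) = e then (1 : ℝ) / 2 else 0) := by
        intro e
        rw [← Finset.sum_filter, Finset.sum_const, nsmul_eq_mul]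
        ring
      calc ∑ e ∈ univ.filter (fun e : Sym2 V => v ∈ e),
            ((univ.filter (fun x => s(x, f x) = e)).card : ℝ) / 2
          = ∑ e ∈ univ.filter (fun e : Sym2 V => v ∈ e),
              ∑ x : V, (if s(x, f x) = e then (1 : ℝ) / 2 else 0) :=
            Finset.sum_congr rfl fun e _ => hg e
        _ = ∑ x : V, ∑ e ∈ univ.filter (fun e : Sym2 V => v ∈ e),
              (if s(x, f x) = e then (1 : ℝ) / 2 else 0) := Finset.sum_comm
        _ = ∑ x : V, (if v ∈ s(x, f x) then (1 : ℝ) / 2 else 0) := by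
            refine Finset.sum_congr rfl fun x _ => ?_
            rw [Finset.sum_ite_eq]
            simp
        _ = 1 := by
            obtain ⟨w, hw⟩ := (Finite.injective_iff_bijective.mp finj).surjective v
            have hset : univ.filter (fun x => v ∈ s(x, f x)) = {v, w} := by
              ext x
              simp only [Finset.mem_filter, Finset.mem_univ, true_and, Sym2.mem_iff,
                Finset.mem_insert, Finset.mem_singleton]
              constructor
              · rintro (rfl | h)
                · exact Or.inl rfl
                · exact Or.inr (finj (hw.trans h)).symm
              · rintro (rfl | rfl)
                · exact Or.inl rfl
                · exact Or.inr hw.symm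
            have hvw : v ≠ w := by
              have hwv : G.Adj w v := hw ▸ hadj w
              exact fun h => G.irrefl (h ▸ hwv)
            rw [← Finset.sum_filter, hset, Finset.sum_pair hvw]
            norm_num
end

section
/- Let n and k be two integers with n ≥ 4k + 6, and let G be a finite simple graph of even order n. Then fmp(G) = n − k if and only if the minimum degree δ(G) = n − k. -/
open Finset

variable {V : Type*}

lemma hasFPM_of_injective [Fintype V] [DecidableEq V] (H : SimpleGraph V) (σ : V → V)
    (hinj : Function.Injective σ) (hadj : ∀ v, H.Adj v (σ v)) : H.HasFPM := by
  classical
  refine ⟨fun e => ((univ.filter (fun v : V => s(v, σ v) = e)).card : ℝ) / 2, ?_, ?_, ?_⟩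
  · intro e
    constructor
    · positivity
    · rw [div_le_one (by norm_num)]
      have h2 : (univ.filter (fun v : V => s(v, σ v) = e)).card ≤ 2 := by
        induction e with
        | _ x y =>
          refine le_trans (card_le_card ?_) (card_insert_le x {y} |>.trans (by simp))
          intro v hv
          simp only [mem_filter, mem_univ, true_and, Sym2.eq_iff] at hv
          rcases hv with ⟨rfl, _⟩ | ⟨rfl, _⟩
          · exact mem_insert_self _ _
          · exact mem_insert_of_mem (mem_singleton_self _)
      exact_mod_cast h2
  · intro e he
    have : (univ.filter (fun v : V => s(v, σ v) = e)) = ∅ := by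
      rw [filter_eq_empty_iff]
      intro v _ hv
      exact he (hv ▸ (hadj v))
    dsimp only
    rw [this]
    simp
  · intro u
    have hbij : Function.Bijective σ := Finite.injective_iff_bijective.mp hinj
    obtain ⟨w, hw⟩ := hbij.2 u
    have hwu : w ≠ u := by
      intro h
      subst h
      have := hadj w
      rw [hw] at this
      exact H.irrefl this
    have hset : (univ.filter (fun v : V => u ∈ s(v, σ v))) = {u, w} := by
      ext v
      simp only [mem_filter, mem_univ, true_and, Sym2.mem_iff, mem_insert, mem_singleton]
      constructor
      · rintro (rfl | h)
        · exact Or.inl rfl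
        · exact Or.inr (hinj (h.symm.trans hw.symm))
      · rintro (rfl | rfl)
        · exact Or.inl rfl
        · exact Or.inr hw.symm
    have hcard2 : (univ.filter (fun v : V => u ∈ s(v, σ v))).card = 2 := by
      rw [hset, card_insert_of_notMem (by simpa using hwu.symm), card_singleton]
    -- key: sum of fiber cards over edges containing u equals the count above
    have hkey : ∑ e ∈ univ.filter (fun e : Sym2 V => u ∈ e),
        (univ.filter (fun v : V => s(v, σ v) = e)).card = 2 := by
      rw [← hcard2]
      rw [Finset.card_eq_sum_card_fiberwise
        (f := fun v : V => s(v, σ v)) (t := univ.filter (fun e : Sym2 V => u ∈ e))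
        (fun v hv => by simp only [mem_coe, mem_filter, mem_univ, true_and] at hv ⊢; exact hv)]
      refine Finset.sum_congr rfl (fun e he => ?_)
      congr 1
      ext v
      simp only [mem_filter, mem_univ, true_and] at he ⊢
      constructor
      · rintro h
        exact ⟨h ▸ he, h⟩
      · rintro ⟨_, h⟩
        exact h
    rw [← Finset.sum_div, ← Nat.cast_sum, hkey]
    norm_num


open scoped Classical in
lemma card_filter_mem_eq_two [Fintype V] [DecidableEq V] {e : Sym2 V} (h : ¬e.IsDiag) :
    (univ.filter (fun v : V => v ∈ e)).card = 2 := by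
  induction e with
  | _ x y =>
    have hxy : x ≠ y := by simpa using h
    have : (univ.filter (fun v : V => v ∈ s(x, y))) = {x, y} := by
      ext v; simp [Sym2.mem_iff]
    rw [this, card_insert_of_notMem (by simpa using hxy), card_singleton]


lemma arith1 (m a b f s y : ℤ) (hSA : a*m ≤ s + a*b) (hsumA : s ≤ f + y)
    (hsym2 : 2*y = a*(a+1)) (hc : f+1 ≤ m) (hba : b+1 ≤ a) (hb0 : 0 ≤ b)
    (ha2 : 2 ≤ a) (hcase1 : 3*a+4 ≤ 2*m) : False := by
  nlinarith [mul_le_mul_of_nonneg_left hba (show (0:ℤ) ≤ a by linarith),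
    mul_le_mul_of_nonneg_right hcase1 (show (0:ℤ) ≤ a - 1 by linarith)]

lemma arith2 (m k a b c n : ℤ) (hn_def : n = m + k) (hn : 4*k+6 ≤ n) (hk : 0 ≤ k)
    (hba : b+1 ≤ a) (hb0 : 0 ≤ b) (hab : a + b ≤ n) (han : a ≤ n)
    (hcge : n ≤ c + a + b) (hc0 : 0 ≤ c) (hk2 : 2*k+3 ≤ a) (hcase2 : 2*m ≤ 3*a+3)
    (hfinal : a*m + c*(m+a+1) ≤ 2*(m-1) + a*b + c*n) : False := by
  -- φ := a*(m-b) + c*(a+1-k) ≥ 2m must fail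
  rcases le_or_gt (n+1) (2*a) with h2a | h2a
  · -- big a
    nlinarith [mul_le_mul_of_nonneg_left (show (b:ℤ) ≤ n - a by linarith) (show (0:ℤ) ≤ a by linarith),
      mul_nonneg hc0 (show (0:ℤ) ≤ a + 1 - k by linarith),
      mul_le_mul_of_nonneg_right h2a (show (0:ℤ) ≤ a - k by linarith),
      mul_le_mul_of_nonneg_right hk2 (show (0:ℤ) ≤ n + 1 by linarith),
      mul_nonneg hk (show (0:ℤ) ≤ n by linarith),
      mul_nonneg hk hk, sq_nonneg (n - 6), mul_nonneg hk (show (0:ℤ) ≤ n - 4*k - 6 by linarith)]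
  · -- small a : c ≥ n+1-2a ≥ 1
    nlinarith [mul_le_mul_of_nonneg_left (show (b:ℤ) ≤ n - a by linarith) (show (0:ℤ) ≤ a by linarith),
      mul_le_mul_of_nonneg_right (show (n:ℤ)+1-2*a ≤ c by linarith) (show (0:ℤ) ≤ a + 1 - k by linarith),
      mul_nonneg (show (0:ℤ) ≤ a - 2*k - 3 by linarith) (show (0:ℤ) ≤ n - 2*a by linarith),
      mul_nonneg (show (0:ℤ) ≤ a - 2*k - 3 by linarith) (show (0:ℤ) ≤ n - 4*k - 6 by linarith),
      mul_nonneg (show (0:ℤ) ≤ n - 2*a by linarith) (show (0:ℤ) ≤ n - 4*k - 6 by linarith),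
      mul_nonneg hk (show (0:ℤ) ≤ n - 4*k - 6 by linarith),
      mul_nonneg hk (show (0:ℤ) ≤ n - 2*a by linarith),
      mul_nonneg hk (show (0:ℤ) ≤ a - 2*k - 3 by linarith)]

open scoped Classical in
lemma hall_survives [Fintype V] [DecidableEq V] (G : SimpleGraph V) (m k : ℕ)
    (hcard : Fintype.card V = m + k) (hn : 4 * k + 6 ≤ m + k)
    (hδ : ∀ v : V, m ≤ (univ.filter (fun w => G.Adj v w)).card)
    (F : Finset (Sym2 V)) (hF : ↑F ⊆ G.edgeSet) (hc : F.card + 1 ≤ m)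
    (A : Finset V) :
    A.card ≤ (A.biUnion (fun v => univ.filter (fun w => (G.deleteEdges ↑F).Adj v w))).card := by
  set n := m + k with hn_def
  clear_value n
  set H := G.deleteEdges ↑F with hH
  set nbr : V → Finset V := fun v => univ.filter (fun w => H.Adj v w) with hnbr
  by_contra hA'
  push_neg at hA'
  -- minimal violator
  obtain ⟨A₀, hA₀mem, hmin⟩ := Finset.exists_min_image
    ((univ : Finset (Finset V)).filter (fun s => (s.biUnion nbr).card < s.card)) card
    ⟨A, mem_filter.mpr ⟨mem_univ _, hA'⟩⟩
  have hA₀ : (A₀.biUnion nbr).card < A₀.card := (mem_filter.mp hA₀mem).2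
  set N := A₀.biUnion nbr with hN
  set a := A₀.card with ha
  set b := N.card with hb
  clear_value a b
  have hba : b < a := hA₀
  have han : a ≤ n := by rw [ha]; exact hcard ▸ card_le_univ A₀
  have hbn : b ≤ n := by rw [hb]; exact hcard ▸ card_le_univ N
  -- dual violator gives a + b ≤ n
  have hab : a + b ≤ n := by
    set B := (univ : Finset V) \ N with hB
    have hBU : B.biUnion nbr ⊆ univ \ A₀ := by
      intro x hx
      obtain ⟨u, hu, hxu⟩ := mem_biUnion.mp hx
      rw [mem_sdiff]
      refine ⟨mem_univ _, fun hxA => ?_⟩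
      have : u ∈ N := mem_biUnion.mpr ⟨x, hxA, by
        simp only [hnbr, mem_filter, mem_univ, true_and] at hxu ⊢
        exact hxu.symm⟩
      exact (mem_sdiff.mp hu).2 this
    have hcardBU : (B.biUnion nbr).card ≤ n - a := by
      calc (B.biUnion nbr).card ≤ (univ \ A₀).card := card_le_card hBU
      _ = n - a := by rw [card_sdiff_of_subset (subset_univ _), Finset.card_univ, hcard, ha]
    have hcardB : B.card = n - b := by
      rw [hB, card_sdiff_of_subset (subset_univ _), Finset.card_univ, hcard, hb]
    have hPB : (B.biUnion nbr).card < B.card := by omega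
    have := hmin B (mem_filter.mpr ⟨mem_univ _, hPB⟩)
    omega
  have ha1 : 1 ≤ a := by omega
  -- F-degree
  set Fdeg : V → ℕ := fun v => (F.filter (fun e => v ∈ e)).card with hFdeg
  have hFdeg_le : ∀ v, Fdeg v ≤ F.card := fun v => card_le_card (filter_subset _ _)
  -- S1 : every vertex of A₀ lost at least m - b edges
  have hS1 : ∀ v ∈ A₀, m ≤ Fdeg v + b := by
    intro v hv
    have hsub : ((univ.filter (fun w => G.Adj v w)) \ N).card ≤ Fdeg v := by
      apply Finset.card_le_card_of_injOn (fun w => s(v, w))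
      · intro w hw
        rw [mem_coe, mem_sdiff, mem_filter] at hw
        obtain ⟨⟨-, hadj⟩, hnN⟩ := hw
        have hnH : ¬ H.Adj v w := by
          intro hHvw
          exact hnN (mem_biUnion.mpr ⟨v, hv, by
            simp only [hnbr, mem_filter, mem_univ, true_and]; exact hHvw⟩)
        have heF : s(v, w) ∈ F := by
          by_contra hne
          exact hnH (by rw [hH]; exact SimpleGraph.deleteEdges_adj.mpr ⟨hadj, by simpa using hne⟩)
        exact mem_filter.mpr ⟨heF, Sym2.mem_mk_left v w⟩
      · intro w hw w' hw' hee
        exact (Sym2.congr_right).mp hee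
    have h2 : (univ.filter (fun w => G.Adj v w)).card ≤
        ((univ.filter (fun w => G.Adj v w)) \ N).card + N.card :=
      Finset.card_le_card_sdiff_add_card
    have := hδ v
    omega
  -- total: sum of Fdeg = 2 |F|
  have hsum2 : ∑ v ∈ univ, Fdeg v = 2 * F.card := by
    simp only [hFdeg, card_filter]
    rw [Finset.sum_comm]
    have : ∀ e ∈ F, (∑ v ∈ univ, if v ∈ e then 1 else 0) = 2 := by
      intro e he
      rw [← card_filter]
      exact card_filter_mem_eq_two (SimpleGraph.not_isDiag_of_mem_edgeSet G (hF he))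
    rw [Finset.sum_congr rfl this, Finset.sum_const, smul_eq_mul, mul_comm]
  -- sum over A₀ bounded using sym2
  have hsumA : ∑ v ∈ A₀, Fdeg v ≤ F.card + A₀.sym2.card := by
    have hswap : ∑ v ∈ A₀, Fdeg v = ∑ e ∈ F, (A₀.filter (fun v => v ∈ e)).card := by
      simp only [hFdeg, card_filter]
      rw [Finset.sum_comm]
    rw [hswap]
    have hbound : ∀ e ∈ F, (A₀.filter (fun v => v ∈ e)).card ≤
        1 + (if e ∈ A₀.sym2 then 1 else 0) := by
      intro e he
      by_cases hmem : e ∈ A₀.sym2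
      · simp only [hmem, if_true]
        induction e with
        | _ x y =>
          calc (A₀.filter (fun v => v ∈ s(x, y))).card ≤ ({x, y} : Finset V).card := by
                apply card_le_card
                intro v hv
                rw [mem_filter] at hv
                simpa [Sym2.mem_iff] using hv.2
          _ ≤ 2 := card_insert_le x {y} |>.trans (by simp)
      · simp only [hmem, if_false, add_zero]
        by_contra hgt
        push_neg at hgt
        obtain ⟨u, hu, w, hw, huw⟩ := Finset.one_lt_card.mp hgt
        rw [mem_filter] at hu hw
        have : e = s(u, w) := (Sym2.mem_and_mem_iff huw).mp ⟨hu.2, hw.2⟩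
        exact hmem (this ▸ (Finset.mk_mem_sym2_iff.mpr ⟨hu.1, hw.1⟩))
    calc ∑ e ∈ F, (A₀.filter (fun v => v ∈ e)).card
        ≤ ∑ e ∈ F, (1 + if e ∈ A₀.sym2 then 1 else 0) := Finset.sum_le_sum hbound
      _ = F.card + (F.filter (fun e => e ∈ A₀.sym2)).card := by
          rw [Finset.sum_add_distrib, Finset.sum_const, smul_eq_mul, mul_one, ← card_filter]
      _ ≤ F.card + A₀.sym2.card :=
          Nat.add_le_add_left (card_le_card fun e he => (mem_filter.mp he).2) _
  have hsym2 : 2 * A₀.sym2.card = a * (a + 1) := by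
    have h1 : A₀.sym2.card = (a + 1) * a / 2 := by
      rw [Finset.card_sym2, ← ha, Nat.choose_two_right, Nat.add_sub_cancel]
    have h2 : 2 ∣ (a + 1) * a := by
      have := Nat.even_mul_succ_self a
      rw [mul_comm] at this
      exact this.two_dvd
    rw [h1, Nat.mul_div_cancel' h2, mul_comm]
  -- lower bound on sum over A₀
  have hSA : a * m ≤ (∑ v ∈ A₀, Fdeg v) + a * b := by
    calc a * m = ∑ _v ∈ A₀, m := by rw [Finset.sum_const, smul_eq_mul, ← ha]
    _ ≤ ∑ v ∈ A₀, (Fdeg v + b) := Finset.sum_le_sum hS1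
    _ = (∑ v ∈ A₀, Fdeg v) + a * b := by rw [Finset.sum_add_distrib, Finset.sum_const, smul_eq_mul, ← ha]
  rcases eq_or_lt_of_le ha1 with haeq | ha2
  · -- a = 1 : single isolated-ish vertex
    have hA1 : A₀.card = 1 := by omega
    obtain ⟨v, hvA⟩ := Finset.card_eq_one.mp hA1
    have hvmem : v ∈ A₀ := by rw [hvA]; exact mem_singleton_self v
    have hb0 : b = 0 := by omega
    have := hS1 v hvmem
    have := hFdeg_le v
    omega
  -- now a ≥ 2
  rcases le_or_gt (3 * a + 4) (2 * m) with hcase1 | hcase2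
  · -- Case 1
    refine arith1 m a b F.card (∑ v ∈ A₀, Fdeg v) A₀.sym2.card ?_ ?_ ?_ ?_ ?_ ?_ ?_ ?_
    · exact_mod_cast hSA
    · exact_mod_cast hsumA
    · exact_mod_cast hsym2
    · exact_mod_cast hc
    · omega
    · positivity
    · omega
    · exact_mod_cast hcase1
  · -- Case 2
    have hk2 : 2 * k + 3 ≤ a := by omega
    set C := (univ : Finset V) \ (A₀ ∪ N) with hC
    set c := C.card with hcc
    clear_value c
    have hcge : n ≤ c + a + b := by
      have h1 : (A₀ ∪ N).card ≤ a + b := by rw [ha, hb]; exact card_union_le _ _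
      have h2 : c = n - (A₀ ∪ N).card := by rw [hcc, hC, card_sdiff_of_subset (subset_univ _), Finset.card_univ, hcard]
      omega
    have hS2 : ∀ u ∈ C, m + a + 1 ≤ Fdeg u + n := by
      intro u hu
      rw [hC, mem_sdiff, mem_union] at hu
      push_neg at hu
      obtain ⟨-, huA, huN⟩ := hu
      set D := (univ.filter (fun w => G.Adj u w)) ∩ A₀ with hD
      have hDle : D.card ≤ Fdeg u := by
        apply Finset.card_le_card_of_injOn (fun w => s(u, w))
        · intro w hw
          rw [mem_coe, hD, mem_inter, mem_filter] at hw
          obtain ⟨⟨-, hadj⟩, hwA⟩ := hw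
          have hnH : ¬ H.Adj u w := by
            intro hHuw
            exact huN (mem_biUnion.mpr ⟨w, hwA, by
              simp only [hnbr, mem_filter, mem_univ, true_and]; exact hHuw.symm⟩)
          have heF : s(u, w) ∈ F := by
            by_contra hne
            exact hnH (by rw [hH]; exact SimpleGraph.deleteEdges_adj.mpr ⟨hadj, by simpa using hne⟩)
          exact mem_filter.mpr ⟨heF, Sym2.mem_mk_left u w⟩
        · intro w hw w' hw' hee
          exact (Sym2.congr_right).mp hee
      have hsubun : (univ.filter (fun w => G.Adj u w)) ⊆ D ∪ ((univ \ A₀).erase u) := by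
        intro w hw
        by_cases hwA : w ∈ A₀
        · exact mem_union_left _ (mem_inter.mpr ⟨hw, hwA⟩)
        · refine mem_union_right _ (mem_erase.mpr ⟨?_, mem_sdiff.mpr ⟨mem_univ _, hwA⟩⟩)
          rw [mem_filter] at hw
          exact hw.2.ne'
      have hcard_erase : ((univ \ A₀).erase u).card = n - a - 1 := by
        rw [card_erase_of_mem (mem_sdiff.mpr ⟨mem_univ _, huA⟩), card_sdiff_of_subset (subset_univ _),
          Finset.card_univ, hcard, ha]
      have haln : a + 1 ≤ n := by
        have hsub2 : A₀ ⊆ univ.erase u := fun x hx => mem_erase.mpr ⟨fun h => huA (h ▸ hx), mem_univ _⟩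
        have h4 := card_le_card hsub2
        rw [card_erase_of_mem (mem_univ u), Finset.card_univ, hcard, ← ha] at h4
        omega
      have h3 : (univ.filter (fun w => G.Adj u w)).card ≤ D.card + (n - a - 1) := by
        calc (univ.filter (fun w => G.Adj u w)).card ≤ (D ∪ ((univ \ A₀).erase u)).card :=
              card_le_card hsubun
        _ ≤ D.card + ((univ \ A₀).erase u).card := card_union_le _ _
        _ = D.card + (n - a - 1) := by rw [hcard_erase]
      have := hδ u
      omega
    have hdisj : Disjoint A₀ C := by
      rw [Finset.disjoint_left]
      intro v hv hvC
      rw [hC, mem_sdiff, mem_union] at hvC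
      exact hvC.2 (Or.inl hv)
    have hSC : c * (m + a + 1) ≤ (∑ u ∈ C, Fdeg u) + c * n := by
      calc c * (m + a + 1) = ∑ _u ∈ C, (m + a + 1) := by rw [Finset.sum_const, smul_eq_mul, hcc]
      _ ≤ ∑ u ∈ C, (Fdeg u + n) := Finset.sum_le_sum hS2
      _ = (∑ u ∈ C, Fdeg u) + c * n := by rw [Finset.sum_add_distrib, Finset.sum_const, smul_eq_mul, hcc]
    have hsplit : (∑ v ∈ A₀, Fdeg v) + (∑ u ∈ C, Fdeg u) ≤ 2 * F.card := by
      rw [← Finset.sum_union hdisj, ← hsum2]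
      exact Finset.sum_le_sum_of_subset (subset_univ _)
    -- final contradiction
    have hSA' : (a:ℤ)*m ≤ (∑ v ∈ A₀, Fdeg v : ℕ) + a*b := by exact_mod_cast hSA
    have hSC' : (c:ℤ)*(m+a+1) ≤ (∑ u ∈ C, Fdeg u : ℕ) + c*n := by exact_mod_cast hSC
    have hsplit' : ((∑ v ∈ A₀, Fdeg v : ℕ) : ℤ) + (∑ u ∈ C, Fdeg u : ℕ) ≤ 2*F.card := by
      exact_mod_cast hsplit
    have hcz : (F.card : ℤ) + 1 ≤ m := by exact_mod_cast hc
    refine arith2 m k a b c n ?_ ?_ ?_ ?_ ?_ ?_ ?_ ?_ ?_ ?_ ?_ ?_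
    · exact_mod_cast hn_def
    · exact_mod_cast hn
    · positivity
    · omega
    · positivity
    · omega
    · omega
    · omega
    · positivity
    · omega
    · omega
    · linarith


open scoped Classical in
lemma ncard_nbr [Fintype V] (G : SimpleGraph V) (v : V) :
    (G.neighborSet v).ncard = (univ.filter (fun w => G.Adj v w)).card := by
  rw [Set.ncard_eq_toFinset_card']
  congr 1
  ext w
  simp [Set.mem_toFinset]

open scoped Classical in
lemma no_fpm_isolate [Fintype V] [DecidableEq V] (G : SimpleGraph V) (v : V) :
    ∃ F : Finset (Sym2 V), ↑F ⊆ G.edgeSet ∧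
      F.card = (univ.filter (fun w => G.Adj v w)).card ∧
      ¬ (G.deleteEdges ↑F).HasFPM := by
  refine ⟨(univ.filter (fun w => G.Adj v w)).image (fun w => s(v, w)), ?_, ?_, ?_⟩
  · intro e he
    simp only [coe_image, Set.mem_image, mem_coe, mem_filter] at he
    obtain ⟨w, ⟨-, hw⟩, rfl⟩ := he
    exact hw
  · rw [Finset.card_image_of_injOn]
    intro w hw w' hw' h
    exact Sym2.congr_right.mp h
  · rintro ⟨f, hf01, hf0, hfsum⟩
    have hzero : ∀ e ∈ univ.filter (fun e : Sym2 V => v ∈ e), f e = 0 := by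
      intro e he
      rw [mem_filter] at he
      obtain ⟨w, rfl⟩ := (Sym2.mem_iff_exists).mp he.2
      apply hf0
      intro hmem
      rw [SimpleGraph.mem_edgeSet, SimpleGraph.deleteEdges_adj] at hmem
      obtain ⟨hadj, hnF⟩ := hmem
      exact hnF (by
        simp only [coe_image, Set.mem_image, mem_coe, mem_filter]
        exact ⟨w, ⟨mem_univ _, hadj⟩, rfl⟩)
    have := hfsum v
    rw [Finset.sum_eq_zero hzero] at this
    norm_num at this

open scoped Classical in
lemma survives [Fintype V] [DecidableEq V] (G : SimpleGraph V) (m k : ℕ)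
    (hcard : Fintype.card V = m + k) (hn : 4 * k + 6 ≤ m + k)
    (hδ : ∀ v : V, m ≤ (univ.filter (fun w => G.Adj v w)).card)
    (F : Finset (Sym2 V)) (hF : ↑F ⊆ G.edgeSet) (hc : F.card + 1 ≤ m) :
    (G.deleteEdges ↑F).HasFPM := by
  have hall := hall_survives G m k hcard hn hδ F hF hc
  obtain ⟨σ, hinj, hmem⟩ := (Finset.all_card_le_biUnion_card_iff_exists_injective
    (fun v : V => univ.filter (fun w => (G.deleteEdges ↑F).Adj v w))).mp hall
  exact hasFPM_of_injective _ σ hinj (fun v => (mem_filter.mp (hmem v)).2)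

theorem fmp_even_order [Fintype V] [DecidableEq V] (G : SimpleGraph V) (n k : ℕ)
    (hcard : Fintype.card V = n) (hn : 4 * k + 6 ≤ n) (heven : Even n) :
    G.fmp = n - k ↔ G.minDeg = n - k := by
  classical
  have hVne : Nonempty V := by
    rw [← Fintype.card_pos_iff, hcard]; omega
  obtain ⟨v₁⟩ := hVne
  -- minimum degree facts
  have hδmem : ∃ v : V, (G.neighborSet v).ncard = G.minDeg :=
    Nat.sInf_mem (⟨(G.neighborSet v₁).ncard, v₁, rfl⟩ :
      {d | ∃ v : V, (G.neighborSet v).ncard = d}.Nonempty)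
  have hδle : ∀ v : V, G.minDeg ≤ (G.neighborSet v).ncard :=
    fun v => Nat.sInf_le ⟨v, rfl⟩
  obtain ⟨v₀, hv₀⟩ := hδmem
  have hdeg_le : ∀ v : V, (univ.filter (fun w => G.Adj v w)).card ≤ n - 1 := by
    intro v
    have hsub : univ.filter (fun w => G.Adj v w) ⊆ univ.erase v := by
      intro w hw
      rw [mem_filter] at hw
      exact mem_erase.mpr ⟨hw.2.ne', mem_univ _⟩
    have h := card_le_card hsub
    rwa [card_erase_of_mem (mem_univ v), Finset.card_univ, hcard] at h
  have hδn : G.minDeg ≤ n - 1 := by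
    have := hdeg_le v₀
    rw [← ncard_nbr, hv₀] at this
    exact this
  -- fmp ≤ minDeg
  have hδ_in : G.minDeg ∈ {k | ∃ F : Finset (Sym2 V), ↑F ⊆ G.edgeSet ∧ F.card = k ∧
      ¬ (G.deleteEdges ↑F).HasFPM} := by
    obtain ⟨F, h1, h2, h3⟩ := no_fpm_isolate G v₀
    exact ⟨F, h1, by rw [h2, ← ncard_nbr, hv₀], h3⟩
  have hfmp_le : G.fmp ≤ G.minDeg := Nat.sInf_le hδ_in
  -- lower bound machinery
  have hlow : ∀ j : ℕ, 4 * j + 6 ≤ n → n - j ≤ G.minDeg → n - j ≤ G.fmp := by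
    intro j hj hδj
    have hmemf := Nat.sInf_mem (⟨G.minDeg, hδ_in⟩ : Set.Nonempty
      {k | ∃ F : Finset (Sym2 V), ↑F ⊆ G.edgeSet ∧ F.card = k ∧
        ¬ (G.deleteEdges ↑F).HasFPM})
    obtain ⟨F, hF1, hF2, hF3⟩ := hmemf
    by_contra hlt
    push_neg at hlt
    have hfmp_eq : F.card = G.fmp := hF2
    apply hF3
    refine survives G (n - j) j (by rw [hcard]; omega) (by omega) ?_ F hF1 (by omega)
    intro v
    have h1 := hδle v
    rw [ncard_nbr] at h1
    omega
  constructor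
  · intro h
    have h1 : n - k ≤ G.minDeg := h ▸ hfmp_le
    rcases Nat.eq_or_lt_of_le h1 with heq | hlt
    · exact heq.symm
    · exfalso
      rcases Nat.eq_zero_or_pos k with rfl | hk1
      · omega
      · have h2 := hlow (k - 1) (by omega) (by omega)
        omega
  · intro h
    have h1 := hlow k hn (by omega)
    omega
end

section
/- Let G be a finite simple graph of odd order n ≥ 7. Then fmp(G) = n − 1 if and only if G is the complete graph on n vertices. -/
set_option linter.unusedSectionVars false
set_option linter.unusedVariables false


open Finset

variable {V : Type*}

section AuxFMP

variable [Fintype V] [DecidableEq V]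

def inE (F : Finset (Sym2 V)) (s : Finset V) : Finset (Sym2 V) :=
  F.filter (fun e => ∀ v ∈ e, v ∈ s)

lemma exists_good_partner (F : Finset (Sym2 V)) (s : Finset V) (x : V) (hx : x ∈ s)
    (hd : ((inE F s).filter (fun e => x ∈ e)).card + 1 < s.card) :
    ∃ y ∈ s, y ≠ x ∧ s(x,y) ∉ F := by
  by_contra h
  push_neg at h
  have hsub : (s.erase x).image (fun y => s(x,y)) ⊆ (inE F s).filter (fun e => x ∈ e) := by
    intro e he
    rw [Finset.mem_image] at he
    obtain ⟨y, hy, rfl⟩ := he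
    rw [Finset.mem_erase] at hy
    rw [Finset.mem_filter]
    refine ⟨Finset.mem_filter.mpr ⟨h y hy.2 hy.1, ?_⟩, Sym2.mem_mk_left _ _⟩
    intro v hv
    rcases Sym2.mem_iff.mp hv with rfl | rfl
    · exact hx
    · exact hy.2
  have hinj : Set.InjOn (fun y => s(x,y)) (s.erase x) := by
    intro a ha b hb hab
    simp only [Finset.coe_erase, Set.mem_diff, Set.mem_singleton_iff] at ha hb
    simp only [Sym2.eq_iff] at hab
    rcases hab with ⟨-, h2⟩ | ⟨h1, h2⟩
    · exact h2
    · exact absurd h2 ha.2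
  have := Finset.card_le_card hsub
  rw [Finset.card_image_of_injOn hinj, Finset.card_erase_of_mem hx] at this
  omega

lemma inE_erase_subset (F : Finset (Sym2 V)) (s : Finset V) (x y : V) :
    inE F ((s.erase x).erase y) ⊆ (inE F s).filter (fun e => x ∉ e ∧ y ∉ e) := by
  intro e he
  rw [inE, Finset.mem_filter] at he
  rw [Finset.mem_filter, inE, Finset.mem_filter]
  have hmem : ∀ v ∈ e, v ∈ s ∧ v ≠ x ∧ v ≠ y := by
    intro v hv
    have := he.2 v hv
    rw [Finset.mem_erase, Finset.mem_erase] at this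
    exact ⟨this.2.2, this.2.1, this.1⟩
  exact ⟨⟨he.1, fun v hv => (hmem v hv).1⟩,
    fun hx' => (hmem x hx').2.1 rfl, fun hy' => (hmem y hy').2.2 rfl⟩

lemma pm_step (F : Finset (Sym2 V)) (hF : ∀ e ∈ F, ¬ e.IsDiag) (s : Finset V)
    (hev : Even s.card) (h2 : 2 ≤ s.card) (hc : (inE F s).card + 2 ≤ s.card) :
    ∃ x ∈ s, ∃ y ∈ s, y ≠ x ∧ s(x,y) ∉ F ∧
      ((inE F ((s.erase x).erase y)).card + 2 ≤ s.card - 2 ∨ (s.erase x).erase y = ∅) := by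
  obtain ⟨m2, hm2⟩ := hev
  by_cases hk2 : s.card ≤ 3
  · -- s.card = 2, inE empty
    have hk : s.card = 2 := by omega
    have hc0' : (inE F s).card = 0 := by omega
    have hc0 : inE F s = ∅ := Finset.card_eq_zero.mp hc0'
    obtain ⟨x, y, hxy, hs2⟩ := Finset.card_eq_two.mp hk
    have hxs : x ∈ s := by rw [hs2]; simp
    have hys : y ∈ s := by rw [hs2]; simp
    refine ⟨x, hxs, y, hys, hxy.symm, ?_, Or.inr ?_⟩
    · intro hmem
      have : s(x,y) ∈ inE F s := by
        rw [inE, Finset.mem_filter]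
        refine ⟨hmem, fun v hv => ?_⟩
        rcases Sym2.mem_iff.mp hv with rfl | rfl
        · exact hxs
        · exact hys
      rw [hc0] at this; exact absurd this (Finset.notMem_empty _)
    · rw [hs2]
      ext v
      simp only [Finset.mem_erase, Finset.mem_insert, Finset.mem_singleton,
        Finset.notMem_empty, iff_false]
      tauto
  · push_neg at hk2
    have key : ∀ x ∈ s, ((inE F s).filter (fun e => x ∈ e)).card + 1 < s.card →
        ∃ y ∈ s, y ≠ x ∧ s(x,y) ∉ F ∧
        (inE F ((s.erase x).erase y)).card ≤
          (inE F s).card - ((inE F s).filter (fun e => x ∈ e)).card := by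
      intro x hx hdx
      obtain ⟨y, hy, hyx, hxyF⟩ := exists_good_partner F s x hx hdx
      refine ⟨y, hy, hyx, hxyF, ?_⟩
      have h1 := Finset.card_le_card (inE_erase_subset F s x y)
      have h2' : (inE F s).filter (fun e => x ∉ e ∧ y ∉ e) ⊆
          (inE F s).filter (fun e => x ∉ e) := by
        intro e he
        rw [Finset.mem_filter] at he ⊢
        exact ⟨he.1, he.2.1⟩
      have h3 := Finset.card_le_card h2'
      have h4 := Finset.card_filter_add_card_filter_not
        (s := inE F s) (p := fun e => x ∈ e)
      omega
    by_cases hcc : (inE F s).card + 4 ≤ s.card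
    · obtain ⟨x, hx⟩ := Finset.card_pos.mp (by omega : 0 < s.card)
      have hdx : ((inE F s).filter (fun e => x ∈ e)).card ≤ (inE F s).card :=
        Finset.card_le_card (Finset.filter_subset _ _)
      obtain ⟨y, hy, hyx, hxyF, hb⟩ := key x hx (by omega)
      exact ⟨x, hx, y, hy, hyx, hxyF, Or.inl (by omega)⟩
    · by_cases hd2 : ∃ x, 2 ≤ ((inE F s).filter (fun e => x ∈ e)).card
      · obtain ⟨x, hdx2⟩ := hd2
        have hdx : ((inE F s).filter (fun e => x ∈ e)).card ≤ (inE F s).card :=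
          Finset.card_le_card (Finset.filter_subset _ _)
        have hx : x ∈ s := by
          obtain ⟨e, he⟩ := Finset.card_pos.mp (by omega :
            0 < ((inE F s).filter (fun e => x ∈ e)).card)
          rw [Finset.mem_filter, inE, Finset.mem_filter] at he
          exact he.1.2 x he.2
        obtain ⟨y, hy, hyx, hxyF, hb⟩ := key x hx (by omega)
        exact ⟨x, hx, y, hy, hyx, hxyF, Or.inl (by omega)⟩
      · push_neg at hd2
        by_cases hcc3 : (inE F s).card + 3 = s.card
        · obtain ⟨e₀, he₀⟩ := Finset.card_pos.mp (by omega : 0 < (inE F s).card)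
          have he₀' := he₀
          rw [inE, Finset.mem_filter] at he₀'
          obtain ⟨a, ha⟩ : ∃ a, a ∈ e₀ := by
            induction e₀ with | _ u w => exact ⟨u, Sym2.mem_mk_left _ _⟩
          have hx : a ∈ s := he₀'.2 a ha
          have hd1 : 0 < ((inE F s).filter (fun e => a ∈ e)).card :=
            Finset.card_pos.mpr ⟨e₀, Finset.mem_filter.mpr ⟨he₀, ha⟩⟩
          obtain ⟨y, hy, hyx, hxyF, hb⟩ := key a hx (by have := hd2 a; omega)
          exact ⟨a, hx, y, hy, hyx, hxyF, Or.inl (by have := hd2 a; omega)⟩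
        · have hck : (inE F s).card + 2 = s.card := by omega
          obtain ⟨e₁, he₁, e₂, he₂, h12⟩ :=
            Finset.one_lt_card.mp (by omega : 1 < (inE F s).card)
          obtain ⟨a, ha⟩ : ∃ a, a ∈ e₁ := by
            induction e₁ with | _ u w => exact ⟨u, Sym2.mem_mk_left _ _⟩
          obtain ⟨b, hb⟩ : ∃ b, b ∈ e₂ := by
            induction e₂ with | _ u w => exact ⟨u, Sym2.mem_mk_left _ _⟩
          have hmm : ∀ z : V, ∀ f₁ f₂ : Sym2 V, f₁ ∈ inE F s → f₂ ∈ inE F s → f₁ ≠ f₂ →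
              z ∈ f₁ → z ∈ f₂ → False := by
            intro z f₁ f₂ hf₁ hf₂ hne hz1 hz2
            have : 2 ≤ ((inE F s).filter (fun e => z ∈ e)).card :=
              Finset.one_lt_card.mpr
                ⟨f₁, Finset.mem_filter.mpr ⟨hf₁, hz1⟩, f₂, Finset.mem_filter.mpr ⟨hf₂, hz2⟩, hne⟩
            exact absurd this (by have := hd2 z; omega)
          have hab : a ≠ b := by
            rintro rfl; exact hmm a e₁ e₂ he₁ he₂ h12 ha hb
          have has : a ∈ s := by
            rw [inE, Finset.mem_filter] at he₁; exact he₁.2 a ha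
          have hbs : b ∈ s := by
            rw [inE, Finset.mem_filter] at he₂; exact he₂.2 b hb
          have habF : s(a,b) ∉ F := by
            intro hmemF
            have hmemE : s(a,b) ∈ inE F s := by
              rw [inE, Finset.mem_filter]
              refine ⟨hmemF, fun v hv => ?_⟩
              rcases Sym2.mem_iff.mp hv with rfl | rfl
              · exact has
              · exact hbs
            by_cases h1 : s(a,b) = e₁
            · exact hmm b e₁ e₂ he₁ he₂ h12 (h1 ▸ Sym2.mem_mk_right a b) hb
            · exact hmm a (s(a,b)) e₁ hmemE he₁ h1 (Sym2.mem_mk_left a b) ha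
          refine ⟨a, has, b, hbs, hab.symm, habF, Or.inl ?_⟩
          have hsub2 : inE F ((s.erase a).erase b) ⊆ (inE F s) \ {e₁, e₂} := by
            intro e he
            have hmem := inE_erase_subset F s a b he
            rw [Finset.mem_filter] at hmem
            rw [Finset.mem_sdiff]
            refine ⟨hmem.1, ?_⟩
            intro hh
            rw [Finset.mem_insert, Finset.mem_singleton] at hh
            rcases hh with rfl | rfl
            · exact hmem.2.1 ha
            · exact hmem.2.2 hb
          have hcd := Finset.card_le_card hsub2
          have hsub3 : ({e₁, e₂} : Finset (Sym2 V)) ⊆ inE F s := by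
            intro e he
            rw [Finset.mem_insert, Finset.mem_singleton] at he
            rcases he with rfl | rfl <;> assumption
          rw [Finset.card_sdiff_of_subset hsub3, Finset.card_pair h12] at hcd
          omega

lemma pm_exists (F : Finset (Sym2 V)) (hF : ∀ e ∈ F, ¬ e.IsDiag) :
    ∀ (N : ℕ) (s : Finset V), s.card ≤ N → Even s.card →
    ((inE F s).card + 2 ≤ s.card ∨ s = ∅) →
    ∃ M : Finset (Sym2 V),
      (∀ e ∈ M, ¬ e.IsDiag ∧ e ∉ F ∧ ∀ v ∈ e, v ∈ s) ∧
      (∀ v ∈ s, ∃! e, e ∈ M ∧ v ∈ e) := by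
  intro N
  induction N with
  | zero =>
    intro s hsN _ _
    have : s = ∅ := Finset.card_eq_zero.mp (by omega)
    subst this
    exact ⟨∅, by simp, by simp⟩
  | succ N ih =>
    intro s hsN hev hcond
    rcases hcond with hc | rfl
    case inr => exact ⟨∅, by simp, by simp⟩
    · have h2 : 2 ≤ s.card := by omega
      obtain ⟨x, hx, y, hy, hyx, hxyF, hrec⟩ := pm_step F hF s hev h2 hc
      have hys : y ∈ s.erase x := Finset.mem_erase.mpr ⟨hyx, hy⟩
      have hcard' : ((s.erase x).erase y).card = s.card - 2 := by
        rw [Finset.card_erase_of_mem hys, Finset.card_erase_of_mem hx]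
        omega
      have hev' : Even ((s.erase x).erase y).card := by
        obtain ⟨m, hm⟩ := hev
        rw [hcard']
        exact ⟨m - 1, by omega⟩
      have hcond' : (inE F ((s.erase x).erase y)).card + 2 ≤ ((s.erase x).erase y).card ∨
          (s.erase x).erase y = ∅ := by
        rcases hrec with h | h
        · exact Or.inl (by omega)
        · exact Or.inr h
      obtain ⟨M', hM'1, hM'2⟩ := ih ((s.erase x).erase y) (by omega) hev' hcond'
      have hxy_notin : ∀ e ∈ M', x ∉ e ∧ y ∉ e := by
        intro e he
        have := (hM'1 e he).2.2
        constructor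
        · intro hxe
          have := this x hxe
          rw [Finset.mem_erase, Finset.mem_erase] at this
          exact this.2.1 rfl
        · intro hye
          have := this y hye
          rw [Finset.mem_erase] at this
          exact this.1 rfl
      refine ⟨insert (s(x,y)) M', ?_, ?_⟩
      · intro e he
        rcases Finset.mem_insert.mp he with rfl | he'
        · refine ⟨by rw [Sym2.mk_isDiag_iff]; exact fun h => hyx h.symm, hxyF, ?_⟩
          intro v hv
          rcases Sym2.mem_iff.mp hv with rfl | rfl
          · exact hx
          · exact hy
        · obtain ⟨hd, hnF, hin⟩ := hM'1 e he'
          refine ⟨hd, hnF, fun v hv => ?_⟩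
          have := hin v hv
          rw [Finset.mem_erase, Finset.mem_erase] at this
          exact this.2.2
      · intro v hv
        by_cases hvxy : v = x ∨ v = y
        · refine ⟨s(x,y), ⟨Finset.mem_insert_self _ _, ?_⟩, ?_⟩
          · rcases hvxy with rfl | rfl
            · exact Sym2.mem_mk_left _ _
            · exact Sym2.mem_mk_right _ _
          · rintro e ⟨he, hve⟩
            rcases Finset.mem_insert.mp he with rfl | he'
            · rfl
            · exfalso
              rcases hvxy with rfl | rfl
              · exact (hxy_notin e he').1 hve
              · exact (hxy_notin e he').2 hve
        · push_neg at hvxy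
          have hv' : v ∈ (s.erase x).erase y :=
            Finset.mem_erase.mpr ⟨hvxy.2, Finset.mem_erase.mpr ⟨hvxy.1, hv⟩⟩
          obtain ⟨e₀, ⟨he₀M, he₀v⟩, huniq⟩ := hM'2 v hv'
          refine ⟨e₀, ⟨Finset.mem_insert_of_mem he₀M, he₀v⟩, ?_⟩
          rintro e ⟨he, hve⟩
          rcases Finset.mem_insert.mp he with rfl | he'
          · exfalso
            rcases Sym2.mem_iff.mp hve with rfl | rfl
            · exact hvxy.1 rfl
            · exact hvxy.2 rfl
          · exact huniq e ⟨he', hve⟩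

lemma card_mem_filter {e : Sym2 V} (hd : ¬ e.IsDiag) :
    (univ.filter (fun v => v ∈ e)).card = 2 := by
  induction e with
  | _ a b =>
    rw [Sym2.mk_isDiag_iff] at hd
    have h : (univ.filter (fun v => v ∈ s(a,b))) = {a, b} := by
      ext v; simp [Sym2.mem_iff]
    rw [h, Finset.card_insert_of_notMem (by simp [hd]), Finset.card_singleton]

lemma handshake (F : Finset (Sym2 V)) (hF : ∀ e ∈ F, ¬ e.IsDiag) :
    ∑ v : V, (F.filter (fun e => v ∈ e)).card = 2 * F.card := by
  have h1 : ∀ v : V, (F.filter (fun e => v ∈ e)).card = ∑ e ∈ F, if v ∈ e then 1 else 0 :=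
    fun v => Finset.card_filter _ _
  simp_rw [h1]
  rw [Finset.sum_comm]
  have h2 : ∀ e ∈ F, (∑ v : V, if v ∈ e then 1 else 0) = 2 := by
    intro e he
    rw [← Finset.card_filter]
    exact card_mem_filter (hF e he)
  rw [Finset.sum_congr rfl h2, Finset.sum_const, smul_eq_mul, mul_comm]

/-- Bound on the number of `F`-neighbours of `u`. -/
lemma fnbr_card_le (F : Finset (Sym2 V)) (u : V) :
    (univ.filter (fun w => s(u,w) ∈ F ∧ w ≠ u)).card ≤
      (F.filter (fun e => u ∈ e)).card := by
  apply Finset.card_le_card_of_injOn (fun w => s(u,w))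
  · intro w hw
    rw [Finset.mem_coe, Finset.mem_filter] at hw ⊢
    exact ⟨hw.2.1, Sym2.mem_mk_left _ _⟩
  · intro a ha b hb hab
    rw [Finset.coe_filter] at ha hb
    simp only [Set.mem_setOf_eq] at ha hb
    rcases Sym2.eq_iff.mp hab with ⟨-, h⟩ | ⟨h1, h2⟩
    · exact h
    · exact absurd h2 ha.2.2

lemma sym2_eq_of_mem {e : Sym2 V} {a b : V} (hd : ¬ e.IsDiag) (ha : a ∈ e) (hb : b ∈ e)
    (hab : a ≠ b) : e = s(a,b) := by
  induction e with
  | _ x y =>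
    rw [Sym2.mk_isDiag_iff] at hd
    rw [Sym2.mem_iff] at ha hb
    rcases ha with rfl | rfl <;> rcases hb with rfl | rfl <;>
      first | (exact absurd rfl hab) | (exact absurd rfl hd) | (rw [Sym2.eq_iff]; tauto)

lemma triangle_exists (F : Finset (Sym2 V)) (hF : ∀ e ∈ F, ¬ e.IsDiag)
    (n : ℕ) (hcard : Fintype.card V = n) (hn : 7 ≤ n)
    (hFc : F.card = n - 2) (v₀ : V) (hv₀ : ∀ e ∈ F, v₀ ∉ e) :
    ∃ p q r : V, p ≠ q ∧ p ≠ r ∧ q ≠ r ∧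
      s(p,q) ∉ F ∧ s(p,r) ∉ F ∧ s(q,r) ∉ F ∧
      (F.filter (fun e => p ∉ e ∧ q ∉ e ∧ r ∉ e)).card + 2 ≤ n - 3 := by
  classical
  set d : V → ℕ := fun v => (F.filter (fun e => v ∈ e)).card with hd
  have hdle : ∀ v, d v ≤ F.card := fun v => Finset.card_le_card (Finset.filter_subset _ _)
  have hdv₀ : d v₀ = 0 := by
    have : F.filter (fun e => v₀ ∈ e) = ∅ := by
      rw [Finset.filter_eq_empty_iff]
      intro e he
      exact fun h => hv₀ e he h
    show (F.filter (fun e => v₀ ∈ e)).card = 0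
    rw [this, Finset.card_empty]
  have hne : (univ : Finset V).Nonempty := by
    rw [← Finset.card_pos, Finset.card_univ, hcard]; omega
  obtain ⟨u₁, -, hu₁max⟩ := Finset.exists_max_image univ d hne
  have hsum : ∑ v : V, d v = 2 * F.card := handshake F hF
  have hu₁2 : 2 ≤ d u₁ := by
    by_contra hlt
    push_neg at hlt
    have hall : ∀ v ∈ (univ : Finset V), d v ≤ 1 := by
      intro v _
      have := hu₁max v (Finset.mem_univ v)
      omega
    have hsc := Finset.sum_le_card_nsmul univ d 1 hall
    rw [Finset.card_univ, hcard, smul_eq_mul, mul_one, hsum] at hsc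
    omega
  have hu₁v₀ : u₁ ≠ v₀ := by rintro rfl; omega
  have tail : ∀ y : V, y ≠ u₁ → y ≠ v₀ → s(u₁,y) ∉ F → 3 ≤ d u₁ + d y →
      ∃ p q r : V, p ≠ q ∧ p ≠ r ∧ q ≠ r ∧
      s(p,q) ∉ F ∧ s(p,r) ∉ F ∧ s(q,r) ∉ F ∧
      (F.filter (fun e => p ∉ e ∧ q ∉ e ∧ r ∉ e)).card + 2 ≤ n - 3 := by
    intro y hyu hyv hyF hsum3
    have hnotF : ∀ z : V, z ≠ v₀ → s(v₀,z) ∉ F := by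
      intro z _ hmem
      exact hv₀ _ hmem (Sym2.mem_mk_left _ _)
    refine ⟨v₀, u₁, y, hu₁v₀.symm, hyv.symm, hyu.symm,
      hnotF u₁ hu₁v₀, hnotF y hyv, hyF, ?_⟩
    have hdisj : Disjoint (F.filter (fun e => u₁ ∈ e)) (F.filter (fun e => y ∈ e)) := by
      rw [Finset.disjoint_left]
      intro e he1 he2
      rw [Finset.mem_filter] at he1 he2
      have : e = s(u₁,y) := sym2_eq_of_mem (hF e he1.1) he1.2 he2.2 (fun h => hyu h.symm)
      rw [this] at he1
      exact hyF he1.1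
    have hunion : (F.filter (fun e => u₁ ∈ e)) ∪ (F.filter (fun e => y ∈ e)) ⊆ F :=
      Finset.union_subset (Finset.filter_subset _ _) (Finset.filter_subset _ _)
    have hsub : F.filter (fun e => v₀ ∉ e ∧ u₁ ∉ e ∧ y ∉ e) ⊆
        F \ ((F.filter (fun e => u₁ ∈ e)) ∪ (F.filter (fun e => y ∈ e))) := by
      intro e he
      rw [Finset.mem_filter] at he
      rw [Finset.mem_sdiff, Finset.mem_union]
      refine ⟨he.1, ?_⟩
      rintro (h | h) <;> rw [Finset.mem_filter] at h
      · exact he.2.2.1 h.2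
      · exact he.2.2.2 h.2
    have hcd := Finset.card_le_card hsub
    rw [Finset.card_sdiff_of_subset hunion, Finset.card_union_of_disjoint hdisj] at hcd
    have hdu : (F.filter (fun e => u₁ ∈ e)).card = d u₁ := rfl
    have hdy : (F.filter (fun e => y ∈ e)).card = d y := rfl
    rw [hdu, hdy] at hcd
    omega
  by_cases hbig : d u₁ = n - 2
  · have hstar : ∀ e ∈ F, u₁ ∈ e := by
      have hsubf : F.filter (fun e => u₁ ∈ e) ⊆ F := Finset.filter_subset _ _
      have hbig' : (F.filter (fun e => u₁ ∈ e)).card = n - 2 := hbig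
      have heq : F.filter (fun e => u₁ ∈ e) = F :=
        Finset.eq_of_subset_of_card_le hsubf (by omega)
      intro e he
      rw [← heq, Finset.mem_filter] at he
      exact he.2
    set A : Finset V := univ.filter (fun w => s(u₁,w) ∈ F ∧ w ≠ u₁) with hA
    have hAcard : n - 2 ≤ A.card := by
      have himg : F ⊆ A.image (fun w => s(u₁,w)) := by
        intro e he
        have hu := hstar e he
        have hnd := hF e he
        induction e with
        | _ a b =>
          rw [Sym2.mk_isDiag_iff] at hnd
          rcases Sym2.mem_iff.mp hu with rfl | rfl
          · exact Finset.mem_image.mpr ⟨b, Finset.mem_filter.mpr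
              ⟨Finset.mem_univ _, he, fun h => hnd h.symm⟩, rfl⟩
          · refine Finset.mem_image.mpr ⟨a, Finset.mem_filter.mpr
              ⟨Finset.mem_univ _, ?_, hnd⟩, Sym2.eq_swap⟩
            rwa [Sym2.eq_swap]
      calc n - 2 = F.card := hFc.symm
        _ ≤ (A.image (fun w => s(u₁,w))).card := Finset.card_le_card himg
        _ ≤ A.card := Finset.card_image_le
    obtain ⟨a, ha⟩ := Finset.card_pos.mp (by omega : 0 < A.card)
    obtain ⟨b, hb⟩ := Finset.card_pos.mp (by
      rw [Finset.card_erase_of_mem ha]; omega : 0 < (A.erase a).card)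
    obtain ⟨c, hc⟩ := Finset.card_pos.mp (by
      rw [Finset.card_erase_of_mem hb, Finset.card_erase_of_mem ha]; omega :
        0 < ((A.erase a).erase b).card)
    rw [Finset.mem_erase] at hb
    rw [Finset.mem_erase, Finset.mem_erase] at hc
    have haA : s(u₁,a) ∈ F ∧ a ≠ u₁ := (Finset.mem_filter.mp ha).2
    have hbA : s(u₁,b) ∈ F ∧ b ≠ u₁ := (Finset.mem_filter.mp hb.2).2
    have hcA : s(u₁,c) ∈ F ∧ c ≠ u₁ := (Finset.mem_filter.mp hc.2.2).2
    have hnotin : ∀ x y : V, x ≠ u₁ → y ≠ u₁ → s(x,y) ∉ F := by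
      intro x y hx hy hmem
      rcases Sym2.mem_iff.mp (hstar _ hmem) with h | h
      · exact hx h.symm
      · exact hy h.symm
    refine ⟨a, b, c, fun h => hb.1 h.symm, fun h => hc.2.1 h.symm, fun h => hc.1 h.symm,
      hnotin a b haA.2 hbA.2, hnotin a c haA.2 hcA.2, hnotin b c hbA.2 hcA.2, ?_⟩
    have hsub : F.filter (fun e => a ∉ e ∧ b ∉ e ∧ c ∉ e) ⊆
        F \ {s(u₁,a), s(u₁,b), s(u₁,c)} := by
      intro e he
      rw [Finset.mem_filter] at he
      rw [Finset.mem_sdiff]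
      refine ⟨he.1, ?_⟩
      intro hmem
      rcases Finset.mem_insert.mp hmem with rfl | hmem'
      · exact he.2.1 (Sym2.mem_mk_right _ _)
      · rcases Finset.mem_insert.mp hmem' with rfl | hmem''
        · exact he.2.2.1 (Sym2.mem_mk_right _ _)
        · rw [Finset.mem_singleton] at hmem''
          rw [hmem''] at he
          exact he.2.2.2 (Sym2.mem_mk_right _ _)
    have htsub : ({s(u₁,a), s(u₁,b), s(u₁,c)} : Finset (Sym2 V)) ⊆ F := by
      intro e he
      rcases Finset.mem_insert.mp he with rfl | he'
      · exact haA.1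
      · rcases Finset.mem_insert.mp he' with rfl | he''
        · exact hbA.1
        · rw [Finset.mem_singleton] at he''; rw [he'']; exact hcA.1
    have hdist : ∀ x y : V, x ≠ y → y ≠ u₁ → s(u₁,x) ≠ s(u₁,y) := by
      intro x y hxy hyu h
      rcases Sym2.eq_iff.mp h with ⟨-, h2⟩ | ⟨h1, -⟩
      · exact hxy h2
      · exact hyu h1.symm
    have ht3 : ({s(u₁,a), s(u₁,b), s(u₁,c)} : Finset (Sym2 V)).card = 3 := by
      rw [Finset.card_insert_of_notMem, Finset.card_insert_of_notMem, Finset.card_singleton]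
      · rw [Finset.mem_singleton]
        exact hdist b c hc.1.symm hcA.2
      · intro hmem
        rcases Finset.mem_insert.mp hmem with h | h
        · exact hdist a b (fun h' => hb.1 h'.symm) hbA.2 h
        · rw [Finset.mem_singleton] at h
          exact hdist a c (fun h' => hc.2.1 h'.symm) hcA.2 h
    have hcd := Finset.card_le_card hsub
    rw [Finset.card_sdiff_of_subset htsub, ht3] at hcd
    omega
  · have hd3 : d u₁ ≤ n - 3 := by have := hdle u₁; omega
    by_cases hdd : 3 ≤ d u₁
    · have h1 : (univ.filter (fun w => s(u₁,w) ∈ F ∧ w ≠ u₁)).card ≤ d u₁ := fnbr_card_le F u₁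
      have hBcard : 0 < (((univ.erase u₁).erase v₀) \
          (univ.filter (fun w => s(u₁,w) ∈ F ∧ w ≠ u₁))).card := by
        have h2 : ((univ.erase u₁).erase v₀).card = n - 2 := by
          rw [Finset.card_erase_of_mem (Finset.mem_erase.mpr ⟨hu₁v₀.symm, Finset.mem_univ _⟩),
            Finset.card_erase_of_mem (Finset.mem_univ _), Finset.card_univ, hcard]
          omega
        have h3 := Finset.le_card_sdiff
          (univ.filter (fun w => s(u₁,w) ∈ F ∧ w ≠ u₁)) ((univ.erase u₁).erase v₀)
        omega
      obtain ⟨y, hy⟩ := Finset.card_pos.mp hBcard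
      rw [Finset.mem_sdiff, Finset.mem_erase, Finset.mem_erase] at hy
      have hyF : s(u₁,y) ∉ F := by
        intro hmem
        exact hy.2 (Finset.mem_filter.mpr ⟨Finset.mem_univ _, hmem, hy.1.2.1⟩)
      exact tail y hy.1.2.1 hy.1.1 hyF (by omega)
    · push_neg at hdd
      have hall2 : ∀ v : V, d v ≤ 2 := by
        intro v
        have := hu₁max v (Finset.mem_univ v)
        omega
      set t : Finset V := univ.filter (fun v => 1 ≤ d v) with ht
      have htcard : n - 2 ≤ t.card := by
        have hsplit : ∑ v ∈ t, d v = ∑ v : V, d v := by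
          apply Finset.sum_subset (Finset.filter_subset _ _)
          intro v _ hv
          by_contra hne0
          exact hv (Finset.mem_filter.mpr ⟨Finset.mem_univ v, by omega⟩)
        have hb := Finset.sum_le_card_nsmul t d 2 (fun v _ => hall2 v)
        rw [hsplit, hsum, smul_eq_mul] at hb
        omega
      have h1 : (univ.filter (fun w => s(u₁,w) ∈ F ∧ w ≠ u₁)).card ≤ d u₁ := fnbr_card_le F u₁
      have hBcard : 0 < ((t.erase u₁) \
          (univ.filter (fun w => s(u₁,w) ∈ F ∧ w ≠ u₁))).card := by
        have h2 : n - 3 ≤ (t.erase u₁).card := by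
          by_cases hu₁t : u₁ ∈ t
          · rw [Finset.card_erase_of_mem hu₁t]; omega
          · rw [Finset.erase_eq_of_notMem hu₁t]; omega
        have h3 := Finset.le_card_sdiff
          (univ.filter (fun w => s(u₁,w) ∈ F ∧ w ≠ u₁)) (t.erase u₁)
        omega
      obtain ⟨y, hy⟩ := Finset.card_pos.mp hBcard
      rw [Finset.mem_sdiff, Finset.mem_erase] at hy
      have hyt : 1 ≤ d y := by
        have h4 := hy.1.2
        rw [ht, Finset.mem_filter] at h4
        exact h4.2
      have hyv₀ : y ≠ v₀ := by rintro rfl; omega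
      have hyF : s(u₁,y) ∉ F := by
        intro hmem
        exact hy.2 (Finset.mem_filter.mpr ⟨Finset.mem_univ _, hmem, hy.1.1⟩)
      exact tail y hy.1.1 hyv₀ hyF (by omega)

lemma sum_filter_support (S : Finset (Sym2 V)) (w : Sym2 V → ℝ) (v : V) :
    ∑ e ∈ univ.filter (fun e : Sym2 V => v ∈ e), (if e ∈ S then w e else 0) =
    ∑ e ∈ S.filter (fun e => v ∈ e), w e := by
  rw [Finset.sum_ite_mem]
  congr 1
  ext e
  simp only [Finset.mem_inter, Finset.mem_filter, Finset.mem_univ, true_and, and_comm]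

lemma hasFPM_of_triangle_matching (F : Finset (Sym2 V)) (p q r : V) (M : Finset (Sym2 V))
    (hpq : p ≠ q) (hpr : p ≠ r) (hqr : q ≠ r)
    (h1 : s(p,q) ∉ F) (h2 : s(p,r) ∉ F) (h3 : s(q,r) ∉ F)
    (hM : ∀ e ∈ M, ¬ e.IsDiag ∧ e ∉ F ∧ ∀ v ∈ e, v ∈ ((univ.erase p).erase q).erase r)
    (hcover : ∀ v ∈ ((univ.erase p).erase q).erase r, ∃! e, e ∈ M ∧ v ∈ e) :
    ((⊤ : SimpleGraph V).deleteEdges ↑F).HasFPM := by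
  classical
  set T : Finset (Sym2 V) := {s(p,q), s(p,r), s(q,r)} with hT
  set S : Finset (Sym2 V) := T ∪ M with hS
  set w : Sym2 V → ℝ := fun e => if e ∈ T then 1/2 else 1 with hw
  have hMp : ∀ e ∈ M, p ∉ e ∧ q ∉ e ∧ r ∉ e := by
    intro e he
    have h := (hM e he).2.2
    refine ⟨fun hp => ?_, fun hq => ?_, fun hr => ?_⟩
    · have := h p hp
      rw [Finset.mem_erase, Finset.mem_erase, Finset.mem_erase] at this
      exact this.2.2.1 rfl
    · have := h q hq
      rw [Finset.mem_erase, Finset.mem_erase] at this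
      exact this.2.1 rfl
    · have := h r hr
      rw [Finset.mem_erase] at this
      exact this.1 rfl
  have hTmem : s(p,q) ∈ T ∧ s(p,r) ∈ T ∧ s(q,r) ∈ T := by
    refine ⟨?_, ?_, ?_⟩ <;> simp [hT]
  have hTprops : ∀ e ∈ T, ¬ e.IsDiag ∧ e ∉ F := by
    intro e he
    rw [hT, Finset.mem_insert, Finset.mem_insert, Finset.mem_singleton] at he
    rcases he with rfl | rfl | rfl <;>
      simp only [Sym2.mk_isDiag_iff] <;> tauto
  have hSprops : ∀ e ∈ S, ¬ e.IsDiag ∧ e ∉ F := by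
    intro e he
    rcases Finset.mem_union.mp he with h | h
    · exact hTprops e h
    · exact ⟨(hM e h).1, (hM e h).2.1⟩
  have hne1 : s(p,q) ≠ s(p,r) := by
    intro h
    rcases Sym2.eq_iff.mp h with ⟨-, h'⟩ | ⟨h', -⟩
    · exact hqr h'
    · exact hpr h'
  have hne2 : s(p,q) ≠ s(q,r) := by
    intro h
    rcases Sym2.eq_iff.mp h with ⟨h', -⟩ | ⟨h', -⟩
    · exact hpq h'
    · exact hpr h'
  have hne3 : s(p,r) ≠ s(q,r) := by
    intro h
    rcases Sym2.eq_iff.mp h with ⟨h', -⟩ | ⟨h', -⟩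
    · exact hpq h'
    · exact hpr h'
  refine ⟨fun e => if e ∈ S then w e else 0, ?_, ?_, ?_⟩
  · intro e
    dsimp only
    by_cases hes : e ∈ S
    · rw [if_pos hes, hw]
      by_cases het : e ∈ T <;> simp [het] <;> norm_num
    · rw [if_neg hes]
      norm_num
  · intro e he
    dsimp only
    by_cases hes : e ∈ S
    · exfalso
      apply he
      rw [SimpleGraph.edgeSet_deleteEdges, SimpleGraph.edgeSet_top]
      exact ⟨(hSprops e hes).1, fun hc => (hSprops e hes).2 (Finset.mem_coe.mp hc)⟩
    · rw [if_neg hes]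
  · intro v
    dsimp only
    rw [sum_filter_support]
    by_cases hvp : v = p
    · subst hvp
      have hfil : S.filter (fun e => v ∈ e) = {s(v,q), s(v,r)} := by
        ext e
        rw [Finset.mem_filter, Finset.mem_insert, Finset.mem_singleton]
        constructor
        · rintro ⟨heS, hve⟩
          rcases Finset.mem_union.mp heS with h | h
          · rw [hT, Finset.mem_insert, Finset.mem_insert, Finset.mem_singleton] at h
            rcases h with rfl | rfl | rfl
            · exact Or.inl rfl
            · exact Or.inr rfl
            · exfalso
              rcases Sym2.mem_iff.mp hve with rfl | rfl
              · exact hpq rfl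
              · exact hpr rfl
          · exact absurd hve (hMp e h).1
        · rintro (rfl | rfl)
          · exact ⟨Finset.mem_union_left _ hTmem.1, Sym2.mem_mk_left _ _⟩
          · exact ⟨Finset.mem_union_left _ hTmem.2.1, Sym2.mem_mk_left _ _⟩
      rw [hfil, Finset.sum_pair hne1, hw]
      dsimp only
      rw [if_pos hTmem.1, if_pos hTmem.2.1]
      norm_num
    · by_cases hvq : v = q
      · subst hvq
        have hfil : S.filter (fun e => v ∈ e) = {s(p,v), s(v,r)} := by
          ext e
          rw [Finset.mem_filter, Finset.mem_insert, Finset.mem_singleton]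
          constructor
          · rintro ⟨heS, hve⟩
            rcases Finset.mem_union.mp heS with h | h
            · rw [hT, Finset.mem_insert, Finset.mem_insert, Finset.mem_singleton] at h
              rcases h with rfl | rfl | rfl
              · exact Or.inl rfl
              · exfalso
                rcases Sym2.mem_iff.mp hve with rfl | rfl
                · exact hpq rfl
                · exact hqr rfl
              · exact Or.inr rfl
            · exact absurd hve (hMp e h).2.1
          · rintro (rfl | rfl)
            · exact ⟨Finset.mem_union_left _ hTmem.1, Sym2.mem_mk_right _ _⟩
            · exact ⟨Finset.mem_union_left _ hTmem.2.2, Sym2.mem_mk_left _ _⟩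
        rw [hfil, Finset.sum_pair hne2, hw]
        dsimp only
        rw [if_pos hTmem.1, if_pos hTmem.2.2]
        norm_num
      · by_cases hvr : v = r
        · subst hvr
          have hfil : S.filter (fun e => v ∈ e) = {s(p,v), s(q,v)} := by
            ext e
            rw [Finset.mem_filter, Finset.mem_insert, Finset.mem_singleton]
            constructor
            · rintro ⟨heS, hve⟩
              rcases Finset.mem_union.mp heS with h | h
              · rw [hT, Finset.mem_insert, Finset.mem_insert, Finset.mem_singleton] at h
                rcases h with rfl | rfl | rfl
                · exfalso
                  rcases Sym2.mem_iff.mp hve with rfl | rfl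
                  · exact hpr rfl
                  · exact hqr rfl
                · exact Or.inl rfl
                · exact Or.inr rfl
              · exact absurd hve (hMp e h).2.2
            · rintro (rfl | rfl)
              · exact ⟨Finset.mem_union_left _ hTmem.2.1, Sym2.mem_mk_right _ _⟩
              · exact ⟨Finset.mem_union_left _ hTmem.2.2, Sym2.mem_mk_right _ _⟩
          rw [hfil, Finset.sum_pair hne3, hw]
          dsimp only
          rw [if_pos hTmem.2.1, if_pos hTmem.2.2]
          norm_num
        · have hv' : v ∈ ((univ.erase p).erase q).erase r :=
            Finset.mem_erase.mpr ⟨hvr, Finset.mem_erase.mpr ⟨hvq,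
              Finset.mem_erase.mpr ⟨hvp, Finset.mem_univ _⟩⟩⟩
          obtain ⟨e₀, ⟨he₀M, he₀v⟩, huniq⟩ := hcover v hv'
          have hfil : S.filter (fun e => v ∈ e) = {e₀} := by
            ext e
            rw [Finset.mem_filter, Finset.mem_singleton]
            constructor
            · rintro ⟨heS, hve⟩
              rcases Finset.mem_union.mp heS with h | h
              · exfalso
                rw [hT, Finset.mem_insert, Finset.mem_insert, Finset.mem_singleton] at h
                rcases h with rfl | rfl | rfl <;> rcases Sym2.mem_iff.mp hve with rfl | rfl <;>
                  first | exact hvp rfl | exact hvq rfl | exact hvr rfl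
              · exact huniq e ⟨h, hve⟩
            · rintro rfl
              exact ⟨Finset.mem_union_right _ he₀M, he₀v⟩
          rw [hfil, Finset.sum_singleton, hw]
          dsimp only
          rw [if_neg]
          intro he₀T
          rw [hT, Finset.mem_insert, Finset.mem_insert, Finset.mem_singleton] at he₀T
          rcases he₀T with rfl | rfl | rfl
          · exact (hMp _ he₀M).1 (Sym2.mem_mk_left _ _)
          · exact (hMp _ he₀M).1 (Sym2.mem_mk_left _ _)
          · exact (hMp _ he₀M).2.1 (Sym2.mem_mk_left _ _)

lemma hasFPM_avg (F : Finset (Sym2 V)) (n : ℕ) (hcard : Fintype.card V = n) (hn : 7 ≤ n)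
    (M : V → Finset (Sym2 V))
    (hM : ∀ v, ∀ e ∈ M v, ¬ e.IsDiag ∧ e ∉ F ∧ ∀ u ∈ e, u ∈ univ.erase v)
    (hcover : ∀ v, ∀ u ∈ univ.erase v, ∃! e, e ∈ M v ∧ u ∈ e) :
    ((⊤ : SimpleGraph V).deleteEdges ↑F).HasFPM := by
  classical
  have hD0 : (0:ℝ) < ((n-1 : ℕ) : ℝ) := by
    have : 1 ≤ n - 1 := by omega
    exact_mod_cast by omega
  have hMv : ∀ v e, e ∈ M v → v ∉ e := by
    intro v e he hv
    have := (hM v e he).2.2 v hv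
    rw [Finset.mem_erase] at this
    exact this.1 rfl
  refine ⟨fun e => ((univ.filter (fun v => e ∈ M v)).card : ℝ) / ((n-1 : ℕ) : ℝ), ?_, ?_, ?_⟩
  · intro e
    dsimp only
    constructor
    · positivity
    · rw [div_le_one hD0]
      have hle : (univ.filter (fun v => e ∈ M v)).card ≤ n - 1 := by
        induction e with
        | _ a b =>
          have hsub : univ.filter (fun v => s(a,b) ∈ M v) ⊆ univ.erase a := by
            intro v hv
            rw [Finset.mem_filter] at hv
            rw [Finset.mem_erase]
            refine ⟨fun h => ?_, Finset.mem_univ _⟩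
            subst h
            exact hMv v _ hv.2 (Sym2.mem_mk_left _ _)
          have := Finset.card_le_card hsub
          rw [Finset.card_erase_of_mem (Finset.mem_univ _), Finset.card_univ, hcard] at this
          exact this
      exact_mod_cast hle
  · intro e he
    dsimp only
    have hempty : univ.filter (fun v => e ∈ M v) = ∅ := by
      rw [Finset.filter_eq_empty_iff]
      intro v _
      intro hmem
      apply he
      rw [SimpleGraph.edgeSet_deleteEdges, SimpleGraph.edgeSet_top]
      exact ⟨(hM v e hmem).1, fun hc => (hM v e hmem).2.1 (Finset.mem_coe.mp hc)⟩
    rw [hempty, Finset.card_empty]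
    norm_num
  · intro u
    dsimp only
    rw [← Finset.sum_div]
    have key : ∑ e ∈ univ.filter (fun e : Sym2 V => u ∈ e),
        ((univ.filter (fun v => e ∈ M v)).card : ℝ) = ((n-1 : ℕ) : ℝ) := by
      have hnat : ∑ e ∈ univ.filter (fun e : Sym2 V => u ∈ e),
          (univ.filter (fun v => e ∈ M v)).card = n - 1 := by
        have h1 : ∀ e : Sym2 V, (univ.filter (fun v => e ∈ M v)).card =
            ∑ v : V, if e ∈ M v then 1 else 0 := fun e => Finset.card_filter _ _
        simp_rw [h1]
        rw [Finset.sum_comm]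
        have h2 : ∀ v : V, (∑ e ∈ univ.filter (fun e : Sym2 V => u ∈ e),
            if e ∈ M v then 1 else 0) = if v = u then 0 else 1 := by
          intro v
          by_cases hvu : v = u
          · subst hvu
            rw [if_pos rfl, Finset.sum_eq_zero]
            intro e he
            rw [Finset.mem_filter] at he
            rw [if_neg]
            intro hmem
            exact hMv v e hmem he.2
          · rw [if_neg hvu]
            obtain ⟨e₀, ⟨he₀M, he₀u⟩, huniq⟩ := hcover v u
              (Finset.mem_erase.mpr ⟨fun h => hvu h.symm, Finset.mem_univ _⟩)
            have hfil : (univ.filter (fun e : Sym2 V => u ∈ e)).filter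
                (fun e => e ∈ M v) = {e₀} := by
              ext e
              rw [Finset.mem_filter, Finset.mem_filter, Finset.mem_singleton]
              constructor
              · rintro ⟨⟨-, hue⟩, hmem⟩
                exact huniq e ⟨hmem, hue⟩
              · rintro rfl
                exact ⟨⟨Finset.mem_univ _, he₀u⟩, he₀M⟩
            calc (∑ e ∈ univ.filter (fun e : Sym2 V => u ∈ e), if e ∈ M v then 1 else 0)
                = ((univ.filter (fun e : Sym2 V => u ∈ e)).filter (fun e => e ∈ M v)).card :=
                  (Finset.card_filter _ _).symm
              _ = 1 := by rw [hfil, Finset.card_singleton]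
        rw [Finset.sum_congr rfl (fun v _ => h2 v)]
        have h3 : (∑ v : V, if v = u then 0 else 1) =
            (univ.filter (fun v : V => ¬ v = u)).card := by
          rw [Finset.card_filter]
          apply Finset.sum_congr rfl
          intro v _
          by_cases h : v = u <;> simp [h]
        have h4 : univ.filter (fun v : V => ¬ v = u) = univ.erase u := by
          ext v
          simp [Finset.mem_erase, and_comm]
        rw [h3, h4, Finset.card_erase_of_mem (Finset.mem_univ _), Finset.card_univ, hcard]
      rw [← hnat]
      push_cast
      rfl
    rw [key, div_self (ne_of_gt hD0)]

lemma hasFPM_delete (F : Finset (Sym2 V)) (n : ℕ) (hcard : Fintype.card V = n)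
    (hodd : Odd n) (hn : 7 ≤ n) (hF : ∀ e ∈ F, ¬ e.IsDiag) (hFc : F.card ≤ n - 2) :
    ((⊤ : SimpleGraph V).deleteEdges ↑F).HasFPM := by
  classical
  have hfilter_erase : ∀ v : V, inE F (univ.erase v) = F.filter (fun e => v ∉ e) := by
    intro v
    apply Finset.filter_congr
    intro e _
    constructor
    · intro h hv
      have := h v hv
      rw [Finset.mem_erase] at this
      exact this.1 rfl
    · intro h w hw
      rw [Finset.mem_erase]
      exact ⟨fun heq => h (heq ▸ hw), Finset.mem_univ _⟩
  by_cases hA : ∀ v : V, (F.filter (fun e => v ∉ e)).card + 2 ≤ n - 1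
  · have hex : ∀ v : V, ∃ M : Finset (Sym2 V),
        (∀ e ∈ M, ¬ e.IsDiag ∧ e ∉ F ∧ ∀ u ∈ e, u ∈ univ.erase v) ∧
        (∀ u ∈ univ.erase v, ∃! e, e ∈ M ∧ u ∈ e) := by
      intro v
      have hcd : (univ.erase v).card = n - 1 := by
        rw [Finset.card_erase_of_mem (Finset.mem_univ _), Finset.card_univ, hcard]
      apply pm_exists F hF (n-1) (univ.erase v) (le_of_eq hcd)
      · rw [hcd]
        obtain ⟨m, hm⟩ := hodd
        exact ⟨m, by omega⟩
      · left
        rw [hfilter_erase v, hcd]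
        exact hA v
    choose M hM1 hM2 using hex
    exact hasFPM_avg F n hcard hn M hM1 hM2
  · push_neg at hA
    obtain ⟨v₀, hv₀'⟩ := hA
    have hsub : F.filter (fun e => v₀ ∉ e) ⊆ F := Finset.filter_subset _ _
    have hle : (F.filter (fun e => v₀ ∉ e)).card ≤ F.card := Finset.card_le_card hsub
    have hFeq : F.filter (fun e => v₀ ∉ e) = F :=
      Finset.eq_of_subset_of_card_le hsub (by omega)
    have hv₀ : ∀ e ∈ F, v₀ ∉ e := by
      intro e he
      rw [← hFeq] at he
      exact (Finset.mem_filter.mp he).2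
    have hFc2 : F.card = n - 2 := by omega
    obtain ⟨p, q, r, hpq, hpr, hqr, h1, h2, h3, hcnt⟩ :=
      triangle_exists F hF n hcard hn hFc2 v₀ hv₀
    have hq : q ∈ univ.erase p :=
      Finset.mem_erase.mpr ⟨fun h => hpq h.symm, Finset.mem_univ _⟩
    have hr : r ∈ (univ.erase p).erase q :=
      Finset.mem_erase.mpr ⟨fun h => hqr h.symm,
        Finset.mem_erase.mpr ⟨fun h => hpr h.symm, Finset.mem_univ _⟩⟩
    have hsetcard : (((univ.erase p).erase q).erase r).card = n - 3 := by
      rw [Finset.card_erase_of_mem hr, Finset.card_erase_of_mem hq,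
        Finset.card_erase_of_mem (Finset.mem_univ _), Finset.card_univ, hcard]
      omega
    have hinE3 : inE F (((univ.erase p).erase q).erase r) =
        F.filter (fun e => p ∉ e ∧ q ∉ e ∧ r ∉ e) := by
      apply Finset.filter_congr
      intro e _
      constructor
      · intro h
        refine ⟨fun hp' => ?_, fun hq' => ?_, fun hr' => ?_⟩
        · have := h p hp'
          rw [Finset.mem_erase, Finset.mem_erase, Finset.mem_erase] at this
          exact this.2.2.1 rfl
        · have := h q hq'
          rw [Finset.mem_erase, Finset.mem_erase] at this
          exact this.2.1 rfl
        · have := h r hr'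
          rw [Finset.mem_erase] at this
          exact this.1 rfl
      · intro h w hw
        rw [Finset.mem_erase, Finset.mem_erase, Finset.mem_erase]
        exact ⟨fun heq => h.2.2 (heq ▸ hw), fun heq => h.2.1 (heq ▸ hw),
          fun heq => h.1 (heq ▸ hw), Finset.mem_univ _⟩
    obtain ⟨Mset, hM1, hM2⟩ := pm_exists F hF (n-3) (((univ.erase p).erase q).erase r)
      (le_of_eq hsetcard)
      (by rw [hsetcard]; obtain ⟨m, hm⟩ := hodd; exact ⟨m - 1, by omega⟩)
      (by left; rw [hinE3, hsetcard]; exact hcnt)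
    exact hasFPM_of_triangle_matching F p q r Mset hpq hpr hqr h1 h2 h3 hM1 hM2

lemma no_fpm_of_isolated (H : SimpleGraph V) (v : V)
    (h : ∀ e ∈ H.edgeSet, v ∉ e) : ¬ H.HasFPM := by
  rintro ⟨f, hb, hz, hs⟩
  have hv := hs v
  rw [Finset.sum_eq_zero] at hv
  · exact one_ne_zero hv.symm
  · intro e he
    rw [Finset.mem_filter] at he
    by_contra hne
    exact h e (by by_contra h2; exact hne (hz e h2)) he.2

lemma star_mem_fmp_set (G : SimpleGraph V) [DecidableRel G.Adj] (v : V) :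
    ∃ F : Finset (Sym2 V), ↑F ⊆ G.edgeSet ∧ F.card = G.degree v ∧
      ¬ (G.deleteEdges ↑F).HasFPM := by
  refine ⟨(G.neighborFinset v).image (fun w => s(v,w)), ?_, ?_, ?_⟩
  · intro e he
    rw [Finset.mem_coe, Finset.mem_image] at he
    obtain ⟨w, hw, rfl⟩ := he
    rw [SimpleGraph.mem_edgeSet]
    exact (SimpleGraph.mem_neighborFinset _ _ _).mp hw
  · rw [Finset.card_image_of_injOn, SimpleGraph.card_neighborFinset_eq_degree]
    intro a ha b hb hab
    rcases Sym2.eq_iff.mp hab with ⟨-, h⟩ | ⟨h1, h2⟩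
    · exact h
    · rw [Finset.mem_coe, SimpleGraph.mem_neighborFinset] at ha
      rw [h2] at ha
      exact absurd ha (G.irrefl)
  · apply no_fpm_of_isolated _ v
    intro e he hv
    rw [SimpleGraph.edgeSet_deleteEdges] at he
    obtain ⟨heG, heF⟩ := he
    induction e with
    | _ a b =>
      rcases Sym2.mem_iff.mp hv with rfl | rfl
      · exact heF (Finset.mem_coe.mpr (Finset.mem_image.mpr
          ⟨b, (SimpleGraph.mem_neighborFinset _ _ _).mpr ((SimpleGraph.mem_edgeSet G).mp heG), rfl⟩))
      · apply heF
        rw [Finset.mem_coe, Finset.mem_image]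
        refine ⟨a, ?_, Sym2.eq_swap⟩
        rw [SimpleGraph.mem_neighborFinset]
        exact ((SimpleGraph.mem_edgeSet G).mp heG).symm


end AuxFMP

theorem fmp_eq_card_sub_one_iff [Fintype V] [DecidableEq V] (G : SimpleGraph V)
    (n : ℕ) (hcard : Fintype.card V = n) (hodd : Odd n) (hn : 7 ≤ n) :
    G.fmp = n - 1 ↔ G = ⊤ := by
  classical
  letI : DecidableRel G.Adj := Classical.decRel _
  have hnV : Nonempty V := by
    rw [← Fintype.card_pos_iff, hcard]; omega
  constructor
  · intro hfmp
    have hdeg : ∀ v, G.degree v = n - 1 := by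
      intro v
      obtain ⟨F, hF1, hF2, hF3⟩ := star_mem_fmp_set G v
      have hle : G.fmp ≤ G.degree v := Nat.sInf_le ⟨F, hF1, hF2, hF3⟩
      have hlt := G.degree_lt_card_verts v
      rw [hcard] at hlt
      omega
    ext a b
    rw [SimpleGraph.top_adj]
    constructor
    · exact G.ne_of_adj
    · intro hab
      have hnb : G.neighborFinset a = univ.erase a := by
        apply Finset.eq_of_subset_of_card_le
        · intro w hw
          rw [SimpleGraph.mem_neighborFinset] at hw
          exact Finset.mem_erase.mpr ⟨(G.ne_of_adj hw).symm, Finset.mem_univ _⟩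
        · rw [Finset.card_erase_of_mem (Finset.mem_univ _), Finset.card_univ, hcard,
            SimpleGraph.card_neighborFinset_eq_degree, hdeg a]
      have hb : b ∈ G.neighborFinset a := by
        rw [hnb, Finset.mem_erase]
        exact ⟨fun h => hab h.symm, Finset.mem_univ _⟩
      rwa [SimpleGraph.mem_neighborFinset] at hb
  · rintro rfl
    obtain ⟨v⟩ := hnV
    obtain ⟨F, hF1, hF2, hF3⟩ := star_mem_fmp_set (⊤ : SimpleGraph V) v
    have hdeg : (⊤ : SimpleGraph V).degree v = n - 1 := by
      rw [← SimpleGraph.card_neighborFinset_eq_degree]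
      have hnb : (⊤ : SimpleGraph V).neighborFinset v = univ.erase v := by
        ext w
        rw [SimpleGraph.mem_neighborFinset, SimpleGraph.top_adj, Finset.mem_erase]
        constructor
        · intro h; exact ⟨fun h2 => h h2.symm, Finset.mem_univ _⟩
        · intro h h2; exact h.1 h2.symm
      rw [hnb, Finset.card_erase_of_mem (Finset.mem_univ _), Finset.card_univ, hcard]
    have hmem : (n - 1) ∈ {k | ∃ F : Finset (Sym2 V),
        ↑F ⊆ (⊤ : SimpleGraph V).edgeSet ∧ F.card = k ∧
        ¬ ((⊤ : SimpleGraph V).deleteEdges ↑F).HasFPM} :=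
      ⟨F, hF1, by rw [hF2, hdeg], hF3⟩
    apply le_antisymm (Nat.sInf_le hmem)
    apply le_csInf ⟨_, hmem⟩
    rintro k ⟨F', hF'1, hF'2, hF'3⟩
    by_contra hlt
    push_neg at hlt
    apply hF'3
    apply hasFPM_delete F' n hcard hodd hn
    · intro e he
      have := hF'1 (Finset.mem_coe.mpr he)
      rw [SimpleGraph.edgeSet_top] at this
      exact this
    · omega
end

section
/- Let G be a finite simple graph of odd order n ≥ 8 (i.e., n odd, n ≥ 9). Then fmp(G) = n − 2 if and only if the minimum degree δ(G) = n − 2. -/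
open Finset

variable {V : Type*}

private lemma sym2_filter_card_le_two [DecidableEq V] (A : Finset V) (e : Sym2 V) :
    (A.filter (fun v => v ∈ e)).card ≤ 2 := by
  induction e with
  | _ x y =>
    have hsub : (A.filter (fun v => v ∈ s(x, y))) ⊆ {x, y} := by
      intro v hv
      simp only [Finset.mem_filter, Sym2.mem_iff] at hv
      simp [hv.2]
    exact (Finset.card_le_card hsub).trans ((Finset.card_insert_le _ _).trans (by simp))

private lemma two_filter_card [DecidableEq V] (F : Finset (Sym2 V)) {z1 z2 : V} (h : z1 ≠ z2) :
    (F.filter (fun e => z1 ∈ e)).card + (F.filter (fun e => z2 ∈ e)).card ≤ F.card + 1 := by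
  rw [← Finset.card_union_add_card_inter]
  have h1 : (F.filter (fun e => z1 ∈ e)) ∪ (F.filter (fun e => z2 ∈ e)) ⊆ F := by
    intro e he
    rcases Finset.mem_union.mp he with h' | h' <;> exact (Finset.mem_filter.mp h').1
  have h2 : (F.filter (fun e => z1 ∈ e)) ∩ (F.filter (fun e => z2 ∈ e)) ⊆ {s(z1, z2)} := by
    intro e he
    rcases Finset.mem_inter.mp he with ⟨he1, he2⟩
    simp only [Finset.mem_singleton]
    exact (Sym2.mem_and_mem_iff h).mp ⟨(Finset.mem_filter.mp he1).2, (Finset.mem_filter.mp he2).2⟩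
  exact add_le_add (Finset.card_le_card h1) ((Finset.card_le_card h2).trans (by simp))

private lemma sum_dF_le [DecidableEq V] (F : Finset (Sym2 V)) (A : Finset V) :
    ∑ v ∈ A, (F.filter (fun e => v ∈ e)).card ≤ 2 * F.card := by
  calc ∑ v ∈ A, (F.filter (fun e => v ∈ e)).card
      = ∑ v ∈ A, ∑ e ∈ F, if v ∈ e then 1 else 0 := by
        refine Finset.sum_congr rfl fun v _ => ?_
        rw [Finset.card_filter]
    _ = ∑ e ∈ F, ∑ v ∈ A, if v ∈ e then 1 else 0 := Finset.sum_comm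
    _ = ∑ e ∈ F, (A.filter (fun v => v ∈ e)).card := by
        refine Finset.sum_congr rfl fun e _ => ?_
        rw [Finset.card_filter]
    _ ≤ ∑ e ∈ F, 2 := Finset.sum_le_sum fun e _ => sym2_filter_card_le_two A e
    _ = 2 * F.card := by rw [Finset.sum_const, smul_eq_mul, mul_comm]

/-- Hall-type argument: if every vertex of `H` has degree at least `n - 2 - dF v`
where `F` has at most `n - 3` edges, then there is a bijection `g` with `v ~ g v`. -/
private lemma key_bij [Fintype V] [DecidableEq V] (H : SimpleGraph V) [DecidableRel H.Adj]
    (F : Finset (Sym2 V)) (hn : 9 ≤ Fintype.card V) (hF : F.card + 3 ≤ Fintype.card V)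
    (hc : ∀ v, Fintype.card V ≤ H.degree v + 2 + (F.filter (fun e => v ∈ e)).card) :
    ∃ g : V → V, Function.Bijective g ∧ ∀ v, H.Adj v (g v) := by
  set n := Fintype.card V with hn'
  have hall : ∀ A : Finset V, A.card ≤ (A.biUnion (fun v => H.neighborFinset v)).card := by
    by_contra hcon
    push_neg at hcon
    obtain ⟨A, hA⟩ := hcon
    set N : Finset V := A.biUnion (fun v => H.neighborFinset v) with hNdef
    have hν : N.card + 1 ≤ A.card := hA
    have hAn : A.card ≤ n := by simpa using Finset.card_le_univ A
    have hdFle : ∀ v : V, (F.filter (fun e => v ∈ e)).card ≤ F.card :=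
      fun v => Finset.card_le_card (Finset.filter_subset _ _)
    have f1 : ∀ v ∈ A, n ≤ N.card + 2 + (F.filter (fun e => v ∈ e)).card := by
      intro v hv
      have hdeg : H.degree v ≤ N.card :=
        Finset.card_le_card (Finset.subset_biUnion_of_mem (fun v => H.neighborFinset v) hv)
      have := hc v
      omega
    by_cases hsmall : A.card ≤ 2
    · interval_cases h : A.card
      · omega
      · obtain ⟨v, hv⟩ := Finset.card_eq_one.mp h
        have := f1 v (by simp [hv])
        have := hdFle v
        omega
      · obtain ⟨z1, z2, hz, hA2⟩ := Finset.card_eq_two.mp h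
        have h1 := f1 z1 (by simp [hA2])
        have h2 := f1 z2 (by simp [hA2])
        have := two_filter_card F hz
        omega
    · by_cases hmid : A.card + 4 ≤ n
      · have hsum : A.card * n ≤ A.card * (N.card + 2) + 2 * F.card := by
          calc A.card * n = ∑ _v ∈ A, n := by rw [Finset.sum_const, smul_eq_mul]
            _ ≤ ∑ v ∈ A, (N.card + 2 + (F.filter (fun e => v ∈ e)).card) :=
                Finset.sum_le_sum f1
            _ = A.card * (N.card + 2) + ∑ v ∈ A, (F.filter (fun e => v ∈ e)).card := by
                rw [Finset.sum_add_distrib, Finset.sum_const, smul_eq_mul]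
            _ ≤ A.card * (N.card + 2) + 2 * F.card := Nat.add_le_add_left (sum_dF_le F A) _
        have h3 : 3 ≤ A.card := by omega
        nlinarith [hν, hF, hn, hmid, hsum]
      · have hbig : n ≤ A.card + 3 := by omega
        set Z : Finset V := Finset.univ \ N with hZdef
        have hZcard : Z.card + N.card = n := by
          rw [hZdef, Finset.card_sdiff_of_subset (Finset.subset_univ N)]
          have := Finset.card_le_univ N
          simp only [Finset.card_univ]
          omega
        have f2 : ∀ z ∈ Z, A.card ≤ 2 + (F.filter (fun e => z ∈ e)).card := by
          intro z hz
          have hnadj : H.neighborFinset z ⊆ Finset.univ \ A := by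
            intro u hu
            rw [Finset.mem_sdiff]
            refine ⟨Finset.mem_univ u, fun huA => ?_⟩
            have : z ∈ N := by
              rw [hNdef]
              refine Finset.mem_biUnion.mpr ⟨u, huA, ?_⟩
              rw [SimpleGraph.mem_neighborFinset]
              exact ((SimpleGraph.mem_neighborFinset H z u).mp hu).symm
            rw [hZdef, Finset.mem_sdiff] at hz
            exact hz.2 this
          have hdeg : H.degree z ≤ n - A.card := by
            have := Finset.card_le_card hnadj
            rw [Finset.card_sdiff_of_subset (Finset.subset_univ A), Finset.card_univ] at this
            exact this
          have := hc z
          omega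
        have hZpos : 1 ≤ Z.card := by omega
        by_cases hZ2 : 2 ≤ Z.card
        · obtain ⟨z1, hz1, z2, hz2, hz12⟩ := Finset.one_lt_card.mp hZ2
          have h1 := f2 z1 hz1
          have h2 := f2 z2 hz2
          have := two_filter_card F hz12
          omega
        · have hZ1 : Z.card = 1 := by omega
          obtain ⟨z, hz⟩ := Finset.card_eq_one.mp hZ1
          have hzZ : z ∈ Z := by simp [hz]
          have h1 := f2 z hzZ
          have := hdFle z
          omega
  obtain ⟨g, hginj, hgmem⟩ := (Finset.all_card_le_biUnion_card_iff_exists_injective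
    (fun v => H.neighborFinset v)).mp hall
  exact ⟨g, Finite.injective_iff_bijective.mp hginj,
    fun v => (SimpleGraph.mem_neighborFinset H v (g v)).mp (hgmem v)⟩

private lemma hasFPM_of_bij [Fintype V] [DecidableEq V] (H : SimpleGraph V)
    (g : V → V) (hbij : Function.Bijective g) (hg : ∀ v, H.Adj v (g v)) : H.HasFPM := by
  refine ⟨fun e => ((Finset.univ.filter fun v => s(v, g v) = e).card : ℝ) / 2, ?_, ?_, ?_⟩
  · intro e
    refine ⟨by positivity, ?_⟩
    rw [div_le_one (by norm_num)]
    have hle : (Finset.univ.filter fun v => s(v, g v) = e).card ≤ 2 := by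
      have hsub : (Finset.univ.filter fun v => s(v, g v) = e) ⊆
          Finset.univ.filter (fun v => v ∈ e) := by
        intro v hv
        simp only [Finset.mem_filter, Finset.mem_univ, true_and] at hv ⊢
        exact hv ▸ Sym2.mem_mk_left v (g v)
      exact (Finset.card_le_card hsub).trans (sym2_filter_card_le_two _ e)
    exact_mod_cast hle
  · intro e he
    have hempty : (Finset.univ.filter fun v => s(v, g v) = e) = ∅ := by
      rw [Finset.filter_eq_empty_iff]
      intro v _
      intro hv
      exact he (hv ▸ (H.mem_edgeSet.mpr (hg v)))
    simp [hempty]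
  · intro u
    rw [← Finset.sum_div]
    have key : ∑ e ∈ Finset.univ.filter (fun e : Sym2 V => u ∈ e),
        (Finset.univ.filter fun v => s(v, g v) = e).card = 2 := by
      obtain ⟨w, hw⟩ := hbij.2 u
      have hwu : w ≠ u := by
        intro h
        subst h
        exact (H.ne_of_adj (hg w)) hw.symm
      calc ∑ e ∈ Finset.univ.filter (fun e : Sym2 V => u ∈ e),
            (Finset.univ.filter fun v => s(v, g v) = e).card
          = ∑ e ∈ Finset.univ.filter (fun e : Sym2 V => u ∈ e),
            ∑ v : V, if s(v, g v) = e then 1 else 0 := by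
            refine Finset.sum_congr rfl fun e _ => ?_
            rw [Finset.card_filter]
        _ = ∑ v : V, ∑ e ∈ Finset.univ.filter (fun e : Sym2 V => u ∈ e),
            if s(v, g v) = e then 1 else 0 := Finset.sum_comm
        _ = ∑ v : V, if u ∈ s(v, g v) then 1 else 0 := by
            refine Finset.sum_congr rfl fun v _ => ?_
            rw [Finset.sum_ite_eq]
            simp
        _ = (Finset.univ.filter fun v => u ∈ s(v, g v)).card := by rw [Finset.card_filter]
        _ = 2 := by
            have hset : (Finset.univ.filter fun v => u ∈ s(v, g v)) = {u, w} := by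
              ext v
              simp only [Finset.mem_filter, Finset.mem_univ, true_and, Sym2.mem_iff,
                Finset.mem_insert, Finset.mem_singleton]
              constructor
              · rintro (h | h)
                · exact Or.inl h.symm
                · exact Or.inr (hbij.1 (by rw [hw, h]))
              · rintro (rfl | rfl)
                · exact Or.inl rfl
                · exact Or.inr hw.symm
            rw [hset, Finset.card_insert_of_notMem (by simp [hwu.symm]),
              Finset.card_singleton]
    rw [← Nat.cast_sum, key]
    norm_num

private lemma no_FPM_of_isolated [Fintype V] [DecidableEq V] (H : SimpleGraph V) (v : V)
    (h : ∀ e ∈ H.edgeSet, v ∉ e) : ¬ H.HasFPM := by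
  rintro ⟨f, _, hf2, hf3⟩
  have hv := hf3 v
  rw [Finset.sum_eq_zero] at hv
  · norm_num at hv
  · intro e he
    rw [Finset.mem_filter] at he
    refine hf2 e fun hmem => h e hmem he.2

private lemma degree_le_deleteEdges_add [Fintype V] [DecidableEq V] (G : SimpleGraph V)
    [DecidableRel G.Adj] (F : Finset (Sym2 V))
    [DecidableRel (G.deleteEdges (↑F : Set (Sym2 V))).Adj] (v : V) :
    G.degree v ≤ (G.deleteEdges (↑F : Set (Sym2 V))).degree v
      + (F.filter (fun e => v ∈ e)).card := by
  classical
  have hsplit := Finset.card_filter_add_card_filter_not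
    (s := G.neighborFinset v) (p := fun u => s(v, u) ∈ F)
  have h2 : ((G.neighborFinset v).filter (fun u => ¬ s(v, u) ∈ F)).card ≤
      (G.deleteEdges (↑F : Set (Sym2 V))).degree v := by
    refine Finset.card_le_card fun u hu => ?_
    rw [Finset.mem_filter, SimpleGraph.mem_neighborFinset] at hu
    rw [SimpleGraph.mem_neighborFinset, SimpleGraph.deleteEdges_adj]
    exact ⟨hu.1, by simpa using hu.2⟩
  have h1 : ((G.neighborFinset v).filter (fun u => s(v, u) ∈ F)).card ≤
      (F.filter (fun e => v ∈ e)).card := by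
    refine Finset.card_le_card_of_injOn (fun u => s(v, u)) ?_ ?_
    · intro u hu
      rw [Finset.mem_coe, Finset.mem_filter] at hu ⊢
      exact ⟨hu.2, Sym2.mem_mk_left v u⟩
    · intro u1 _ u2 _ h
      exact Sym2.congr_right.mp h
  have : G.degree v = (G.neighborFinset v).card := rfl
  omega

private lemma minDeg_le_degree [Fintype V] (G : SimpleGraph V) [DecidableRel G.Adj] (v : V) :
    G.minDeg ≤ G.degree v := by
  refine Nat.sInf_le ⟨v, ?_⟩
  rw [Set.ncard_eq_toFinset_card']
  rfl

private lemma exists_degree_eq_minDeg [Fintype V] [Nonempty V] (G : SimpleGraph V)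
    [DecidableRel G.Adj] : ∃ v : V, G.degree v = G.minDeg := by
  have hne : {d | ∃ v : V, (G.neighborSet v).ncard = d}.Nonempty :=
    ⟨_, Classical.arbitrary V, rfl⟩
  obtain ⟨v, hv⟩ := Nat.sInf_mem hne
  refine ⟨v, ?_⟩
  rw [SimpleGraph.minDeg, ← hv, Set.ncard_eq_toFinset_card']
  rfl

theorem fmp_eq_card_sub_two_iff [Fintype V] [DecidableEq V] (G : SimpleGraph V)
    (n : ℕ) (hcard : Fintype.card V = n) (hodd : Odd n) (hn : 8 ≤ n) :
    G.fmp = n - 2 ↔ G.minDeg = n - 2 := by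
  classical
  have hn9 : 9 ≤ n := by obtain ⟨k, hk⟩ := hodd; omega
  have hVne : Nonempty V := Fintype.card_pos_iff.mp (by omega)
  -- the set whose infimum is `fmp`
  have hfmp_def : G.fmp = sInf {k | ∃ F : Finset (Sym2 V), ↑F ⊆ G.edgeSet ∧ F.card = k ∧
      ¬ (G.deleteEdges ↑F).HasFPM} := rfl
  -- deleting all edges at a vertex precludes fractional perfect matchings
  have hmem : ∀ v : V, ∃ F : Finset (Sym2 V), ↑F ⊆ G.edgeSet ∧ F.card = G.degree v ∧
      ¬ (G.deleteEdges (↑F : Set (Sym2 V))).HasFPM := by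
    intro v
    refine ⟨G.incidenceFinset v, ?_, G.card_incidenceFinset_eq_degree v, ?_⟩
    · intro e he
      rw [Finset.mem_coe, SimpleGraph.mem_incidenceFinset] at he
      exact he.1
    · apply no_FPM_of_isolated _ v
      intro e hmemE hve
      rw [SimpleGraph.edgeSet_deleteEdges] at hmemE
      refine hmemE.2 ?_
      rw [Finset.mem_coe, SimpleGraph.mem_incidenceFinset]
      exact ⟨hmemE.1, hve⟩
  have hSne : {k | ∃ F : Finset (Sym2 V), ↑F ⊆ G.edgeSet ∧ F.card = k ∧
      ¬ (G.deleteEdges ↑F).HasFPM}.Nonempty := ⟨_, hmem (Classical.arbitrary V)⟩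
  have hfmp_mem : ∃ F : Finset (Sym2 V), ↑F ⊆ G.edgeSet ∧ F.card = G.fmp ∧
      ¬ (G.deleteEdges (↑F : Set (Sym2 V))).HasFPM := by
    rw [hfmp_def]
    exact Nat.sInf_mem hSne
  obtain ⟨v0, hv0⟩ := exists_degree_eq_minDeg G
  have hfmp_le_minDeg : G.fmp ≤ G.minDeg := by
    rw [hfmp_def, ← hv0]
    exact Nat.sInf_le (hmem v0)
  have hminDeg_le : G.minDeg ≤ n - 1 := by
    have h1 := minDeg_le_degree G v0
    have h2 : G.degree v0 < Fintype.card V := G.degree_lt_card_verts v0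
    omega
  constructor
  · -- fmp = n - 2 → minDeg = n - 2
    intro hfmp
    by_contra hne
    have hmd : G.minDeg = n - 1 := by omega
    have hdegall : ∀ v : V, n - 1 ≤ G.degree v := fun v => hmd ▸ minDeg_le_degree G v
    obtain ⟨F, hFsub, hFcard, hFno⟩ := hfmp_mem
    rw [hfmp] at hFcard
    have hFpos : 0 < F.card := by omega
    obtain ⟨e₀, he₀⟩ := Finset.card_pos.mp hFpos
    set F' : Finset (Sym2 V) := F.erase e₀ with hF'def
    have hF'card : F'.card + 1 = F.card := Finset.card_erase_add_one he₀
    have hc : ∀ v, Fintype.card V ≤ (G.deleteEdges (↑F : Set (Sym2 V))).degree v + 2 +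
        (F'.filter (fun e => v ∈ e)).card := by
      intro v
      have hd := degree_le_deleteEdges_add G F v
      have hfil : (F.filter (fun e => v ∈ e)).card ≤ (F'.filter (fun e => v ∈ e)).card + 1 := by
        have hsub : F.filter (fun e => v ∈ e) ⊆ insert e₀ (F'.filter (fun e => v ∈ e)) := by
          intro e he
          rw [Finset.mem_filter] at he
          rcases eq_or_ne e e₀ with rfl | hne'
          · exact Finset.mem_insert_self _ _
          · exact Finset.mem_insert_of_mem (Finset.mem_filter.mpr
              ⟨Finset.mem_erase.mpr ⟨hne', he.1⟩, he.2⟩)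
        exact (Finset.card_le_card hsub).trans (Finset.card_insert_le _ _)
      have := hdegall v
      omega
    obtain ⟨g, hbij, hadj⟩ := key_bij (G.deleteEdges (↑F : Set (Sym2 V))) F'
      (by omega) (by omega) hc
    exact hFno (hasFPM_of_bij _ g hbij hadj)
  · -- minDeg = n - 2 → fmp = n - 2
    intro hmd
    have hdegall : ∀ v : V, n - 2 ≤ G.degree v := fun v => hmd ▸ minDeg_le_degree G v
    have hupper : G.fmp ≤ n - 2 := by
      calc G.fmp ≤ G.minDeg := hfmp_le_minDeg
        _ = n - 2 := hmd
    have hlower : n - 2 ≤ G.fmp := by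
      by_contra hlt
      push_neg at hlt
      obtain ⟨F, hFsub, hFcard, hFno⟩ := hfmp_mem
      have hFsmall : F.card + 3 ≤ n := by omega
      have hc : ∀ v, Fintype.card V ≤ (G.deleteEdges (↑F : Set (Sym2 V))).degree v + 2 +
          (F.filter (fun e => v ∈ e)).card := by
        intro v
        have hd := degree_le_deleteEdges_add G F v
        have := hdegall v
        omega
      obtain ⟨g, hbij, hadj⟩ := key_bij (G.deleteEdges (↑F : Set (Sym2 V))) F
        (by omega) (by omega) hc
      exact hFno (hasFPM_of_bij _ g hbij hadj)
    omega
end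

section
/- Let n and k be two positive integers with n ≥ 4k + 5, and let G be a finite simple graph of odd order n. Then fmp(G) = n − k if and only if the minimum degree δ(G) = n − k. -/
open Finset

variable {V : Type*}

lemma hasFPM_of_perm [Fintype V] [DecidableEq V] (H : SimpleGraph V) (σ : Equiv.Perm V)
    (hadj : ∀ v, H.Adj v (σ v)) : H.HasFPM := by
  classical
  refine ⟨fun e => ((univ.filter fun w => s(w, σ w) = e).card : ℝ)/2, ?_, ?_, ?_⟩
  · intro e
    constructor
    · positivity
    · rw [div_le_one (by norm_num)]
      induction e using Sym2.ind with
      | _ x y =>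
        have hsub : (univ.filter fun w => s(w, σ w) = s(x, y)) ⊆ {x, y} := by
          intro w hw
          simp only [mem_filter, mem_univ, true_and] at hw
          have : w ∈ s(x, y) := hw ▸ Sym2.mem_mk_left w (σ w)
          simpa [Finset.mem_insert] using Sym2.mem_iff.mp this
        have h2 : ({x, y} : Finset V).card ≤ 2 :=
          (Finset.card_insert_le x {y}).trans (by simp)
        exact_mod_cast (Finset.card_le_card hsub).trans h2
  · intro e he
    rw [div_eq_zero_iff]
    left
    norm_cast
    rw [Finset.card_eq_zero, Finset.filter_eq_empty_iff]
    intro w _ hw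
    exact he (hw ▸ (hadj w))
  · intro v
    have hfib : (univ.filter fun w => v ∈ s(w, σ w)).card =
        ∑ e ∈ univ.filter (fun e : Sym2 V => v ∈ e),
          ((univ.filter fun w => v ∈ s(w, σ w)).filter fun w => s(w, σ w) = e).card :=
      Finset.card_eq_sum_card_fiberwise (fun w hw => by
        simp only [Finset.mem_coe, mem_filter, mem_univ, true_and] at hw ⊢; exact hw)
    have hfib2 : ∀ e ∈ univ.filter (fun e : Sym2 V => v ∈ e),
        ((univ.filter fun w => v ∈ s(w, σ w)).filter fun w => s(w, σ w) = e)
          = (univ.filter fun w => s(w, σ w) = e) := by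
      intro e he
      simp only [mem_filter, mem_univ, true_and] at he
      rw [Finset.filter_filter]
      apply Finset.filter_congr
      intro w _
      constructor
      · exact fun h => h.2
      · exact fun h => ⟨h ▸ he, h⟩
    have hset : (univ.filter fun w => v ∈ s(w, σ w)) = {v, σ.symm v} := by
      ext w
      simp only [mem_filter, mem_univ, true_and, Sym2.mem_iff, Finset.mem_insert,
        Finset.mem_singleton]
      constructor
      · rintro (h | h)
        · exact Or.inl h.symm
        · exact Or.inr (by rw [eq_comm, Equiv.symm_apply_eq]; exact h)
      · rintro (h | h)
        · exact Or.inl h.symm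
        · exact Or.inr (by rw [h]; simp)
    have hne : v ≠ σ.symm v := by
      intro h
      have h2 : σ v = v := by conv_lhs => rw [h, Equiv.apply_symm_apply]
      exact H.irrefl (h2 ▸ hadj v)
    have hcard2 : (univ.filter fun w => v ∈ s(w, σ w)).card = 2 := by
      rw [hset, Finset.card_insert_of_notMem (by simpa using hne), Finset.card_singleton]
    rw [← Finset.sum_div, ← Nat.cast_sum]
    rw [Finset.sum_congr rfl (fun e he => congrArg Finset.card (hfib2 e he).symm)]
    rw [← hfib, hcard2]
    norm_num

lemma hasFPM_of_hall [Fintype V] [DecidableEq V] (H : SimpleGraph V) [DecidableRel H.Adj]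
    (h : ∀ Y : Finset V, Y.card ≤ (Y.biUnion fun v => H.neighborFinset v).card) : H.HasFPM := by
  obtain ⟨f, hinj, hf⟩ := (Finset.all_card_le_biUnion_card_iff_exists_injective
    (fun v => H.neighborFinset v)).mp h
  have hbij : Function.Bijective f := Finite.injective_iff_bijective.mp hinj
  refine hasFPM_of_perm H (Equiv.ofBijective f hbij) (fun v => ?_)
  have := hf v
  rw [SimpleGraph.mem_neighborFinset] at this
  exact this

lemma deficient_aux [Fintype V] [DecidableEq V] (G : SimpleGraph V) (F : Finset (Sym2 V))
    (hF : ↑F ⊆ G.edgeSet) (n d : ℕ) (hcard : Fintype.card V = n)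
    (h4 : 3*n+5 ≤ 4*d) (hdn : d+1 ≤ n)
    (hdeg : ∀ v, d ≤ (G.neighborSet v).ncard) (hm : F.card + 1 ≤ d)
    (Y : Finset V) (hY : Y.Nonempty) (hYs : 2 * Y.card ≤ n + 1)
    (hdY : ∀ v ∈ Y, ((G.deleteEdges ↑F).neighborSet v).ncard + 1 ≤ Y.card) : False := by
  classical
  set H := G.deleteEdges (↑F : Set (Sym2 V)) with hH
  have hncard : ∀ (K : SimpleGraph V) [DecidableRel K.Adj] (v : V),
      (K.neighborSet v).ncard = (K.neighborFinset v).card := by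
    intro K _ v
    rw [SimpleGraph.neighborFinset_def, Set.ncard_eq_toFinset_card']
  -- step 1 : local degree bound
  have step1 : ∀ v ∈ Y, d + 1 ≤ Y.card + (F.filter (fun e => v ∈ e)).card := by
    intro v hv
    have hGH : H.neighborFinset v ⊆ G.neighborFinset v := by
      intro w hw
      rw [SimpleGraph.mem_neighborFinset] at hw ⊢
      exact ((SimpleGraph.deleteEdges_adj).mp hw).1
    have hinj : (G.neighborFinset v \ H.neighborFinset v).card
        ≤ (F.filter (fun e => v ∈ e)).card := by
      apply Finset.card_le_card_of_injOn (fun w => s(v, w))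
      · intro w hw
        rw [Finset.mem_coe, Finset.mem_sdiff, SimpleGraph.mem_neighborFinset,
          SimpleGraph.mem_neighborFinset] at hw
        obtain ⟨hadj, hnadj⟩ := hw
        rw [Finset.mem_coe, Finset.mem_filter]
        refine ⟨?_, Sym2.mem_mk_left v w⟩
        by_contra hne
        exact hnadj (SimpleGraph.deleteEdges_adj.mpr ⟨hadj, hne⟩)
      · intro w1 h1 w2 h2 heq
        simp only [Finset.coe_sdiff, Set.mem_diff, Finset.mem_coe,
          SimpleGraph.mem_neighborFinset] at h1 h2
        rw [Sym2.eq_iff] at heq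
        rcases heq with ⟨_, h⟩ | ⟨h, h'⟩
        · exact h
        · exact absurd h'.symm h1.1.ne
    have hcardeq : (G.neighborFinset v \ H.neighborFinset v).card
        + (H.neighborFinset v).card = (G.neighborFinset v).card :=
      Finset.card_sdiff_add_card_eq_card hGH
    have h1 := hdeg v
    rw [hncard G v] at h1
    have h2 := hdY v hv
    rw [hncard H v] at h2
    omega
  -- step 2 : sum of degree bounds
  have step2 : Y.card * (d+1) ≤ Y.card * Y.card
      + ∑ v ∈ Y, (F.filter (fun e => v ∈ e)).card := by
    calc Y.card * (d+1) = ∑ _v ∈ Y, (d+1) := by rw [Finset.sum_const, smul_eq_mul]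
    _ ≤ ∑ v ∈ Y, (Y.card + (F.filter (fun e => v ∈ e)).card) := Finset.sum_le_sum step1
    _ = Y.card * Y.card + ∑ v ∈ Y, (F.filter (fun e => v ∈ e)).card := by
        rw [Finset.sum_add_distrib, Finset.sum_const, smul_eq_mul]
  -- step 3 : swap the double count
  have step3 : ∑ v ∈ Y, (F.filter (fun e => v ∈ e)).card
      = ∑ e ∈ F, (Y.filter (fun v => v ∈ e)).card := by
    simp_rw [Finset.card_filter]
    exact Finset.sum_comm
  -- step 4 : pointwise bound
  have step4 : ∀ e ∈ F, (Y.filter (fun v => v ∈ e)).card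
      ≤ 1 + (if e ∈ Y.sym2 then 1 else 0) := by
    intro e he
    induction e using Sym2.ind with
    | _ x y =>
      have hxy : x ≠ y := by
        have := G.not_isDiag_of_mem_edgeSet (hF he)
        simpa [Sym2.mk_isDiag_iff] using this
      by_cases hx : x ∈ Y <;> by_cases hy : y ∈ Y
      · have hsub : Y.filter (fun v => v ∈ s(x,y)) ⊆ {x, y} := by
          intro w hw
          rw [Finset.mem_filter] at hw
          simpa [Finset.mem_insert] using Sym2.mem_iff.mp hw.2
        have : (Y.filter (fun v => v ∈ s(x,y))).card ≤ 2 :=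
          (Finset.card_le_card hsub).trans
            ((Finset.card_insert_le x {y}).trans (by simp))
        rw [if_pos (Finset.mk_mem_sym2_iff.mpr ⟨hx, hy⟩)]
        omega
      · have hsub : Y.filter (fun v => v ∈ s(x,y)) ⊆ {x} := by
          intro w hw
          rw [Finset.mem_filter] at hw
          rcases Sym2.mem_iff.mp hw.2 with h | h
          · simp [h]
          · exact absurd (h ▸ hw.1) hy
        have := (Finset.card_le_card hsub).trans (Finset.card_singleton x).le
        omega
      · have hsub : Y.filter (fun v => v ∈ s(x,y)) ⊆ {y} := by
          intro w hw
          rw [Finset.mem_filter] at hw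
          rcases Sym2.mem_iff.mp hw.2 with h | h
          · exact absurd (h ▸ hw.1) hx
          · simp [h]
        have := (Finset.card_le_card hsub).trans (Finset.card_singleton y).le
        omega
      · have hsub : Y.filter (fun v => v ∈ s(x,y)) ⊆ {x} := by
          intro w hw
          rw [Finset.mem_filter] at hw
          rcases Sym2.mem_iff.mp hw.2 with h | h
          · simp [h]
          · exact absurd (h ▸ hw.1) hy
        have := (Finset.card_le_card hsub).trans (Finset.card_singleton x).le
        omega
  -- step 5
  have step5 : ∑ e ∈ F, (Y.filter (fun v => v ∈ e)).card
      ≤ F.card + (F.filter (fun e => e ∈ Y.sym2)).card := by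
    calc ∑ e ∈ F, (Y.filter (fun v => v ∈ e)).card
        ≤ ∑ e ∈ F, (1 + if e ∈ Y.sym2 then 1 else 0) := Finset.sum_le_sum step4
    _ = F.card + (F.filter (fun e => e ∈ Y.sym2)).card := by
        rw [Finset.sum_add_distrib, Finset.sum_const, smul_eq_mul, mul_one,
          Finset.card_filter]
  -- step 6
  have step6 : (F.filter (fun e => e ∈ Y.sym2)).card + Y.card ≤ Y.sym2.card := by
    have hD : (Y.image (fun a => s(a,a))).card = Y.card := by
      apply Finset.card_image_of_injective
      intro a b hab
      simpa [Sym2.eq_iff] using hab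
    have hsub : F.filter (fun e => e ∈ Y.sym2) ∪ Y.image (fun a => s(a,a)) ⊆ Y.sym2 := by
      intro e he
      rcases Finset.mem_union.mp he with h | h
      · exact (Finset.mem_filter.mp h).2
      · obtain ⟨a, ha, rfl⟩ := Finset.mem_image.mp h
        exact Finset.mk_mem_sym2_iff.mpr ⟨ha, ha⟩
    have hdisj : Disjoint (F.filter (fun e => e ∈ Y.sym2)) (Y.image (fun a => s(a,a))) := by
      rw [Finset.disjoint_left]
      intro e he1 he2
      obtain ⟨a, _, rfl⟩ := Finset.mem_image.mp he2
      exact G.not_isDiag_of_mem_edgeSet (hF (Finset.mem_filter.mp he1).1)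
        (by simp [Sym2.mk_isDiag_iff])
    calc (F.filter (fun e => e ∈ Y.sym2)).card + Y.card
        = (F.filter (fun e => e ∈ Y.sym2) ∪ Y.image (fun a => s(a,a))).card := by
          rw [Finset.card_union_of_disjoint hdisj, hD]
    _ ≤ Y.sym2.card := Finset.card_le_card hsub
  -- step 7
  have step7 : 2 * Y.sym2.card ≤ Y.card * (Y.card + 1) := by
    rw [Finset.card_sym2, Nat.choose_two_right]
    have h1 := Nat.div_mul_le_self ((Y.card + 1) * (Y.card + 1 - 1)) 2
    have hk : (Y.card + 1) * (Y.card + 1 - 1) = Y.card * (Y.card + 1) := by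
      rw [Nat.add_sub_cancel]; ring
    omega
  -- combine
  have hy1 : 1 ≤ Y.card := hY.card_pos
  set y := Y.card
  set fc := F.card
  set f2 := (F.filter (fun e => e ∈ Y.sym2)).card
  have key : y * (d+1) ≤ y * y + fc + f2 := by
    calc y*(d+1) ≤ y*y + ∑ v ∈ Y, (F.filter (fun e => v ∈ e)).card := step2
    _ = y*y + ∑ e ∈ F, (Y.filter (fun v => v ∈ e)).card := by rw [step3]
    _ ≤ y*y + (fc + f2) := Nat.add_le_add_left step5 _
    _ = y*y + fc + f2 := by ring
  have hyZ : (1:ℤ) ≤ (y:ℤ) := by exact_mod_cast hy1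
  have hprod : (0:ℤ) ≤ ((y:ℤ) - 1) * (2*(d:ℤ) - 3*(y:ℤ) - 1) := by
    apply mul_nonneg
    · linarith
    · have h1 : (2:ℤ) * y ≤ (n:ℤ) + 1 := by exact_mod_cast hYs
      have h2 : 3*(n:ℤ)+5 ≤ 4*(d:ℤ) := by exact_mod_cast h4
      linarith
  have keyZ : (y:ℤ) * (d+1) ≤ (y:ℤ) * y + fc + f2 := by exact_mod_cast key
  have step7Z : 2 * ((f2:ℤ) + y) ≤ (y:ℤ) * (y + 1) := by
    have h6 : (f2:ℤ) + y ≤ ((Y.sym2.card : ℕ) : ℤ) := by exact_mod_cast step6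
    have h7 : 2 * ((Y.sym2.card : ℕ) : ℤ) ≤ (y:ℤ) * (y+1) := by exact_mod_cast step7
    linarith
  have hmZ : (fc:ℤ) + 1 ≤ (d:ℤ) := by exact_mod_cast hm
  nlinarith [hprod, keyZ, step7Z, hmZ]

lemma hncard_aux [Fintype V] (K : SimpleGraph V) [DecidableRel K.Adj] (v : V) :
    (K.neighborSet v).ncard = (K.neighborFinset v).card := by
  rw [SimpleGraph.neighborFinset_def, Set.ncard_eq_toFinset_card']

lemma fpm_delete [Fintype V] [DecidableEq V] (G : SimpleGraph V) (n d : ℕ)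
    (hcard : Fintype.card V = n) (h4 : 3*n+5 ≤ 4*d) (hdn : d+1 ≤ n)
    (hdeg : ∀ v, d ≤ (G.neighborSet v).ncard)
    (F : Finset (Sym2 V)) (hF : ↑F ⊆ G.edgeSet) (hm : F.card + 1 ≤ d) :
    (G.deleteEdges (↑F : Set (Sym2 V))).HasFPM := by
  classical
  set H := G.deleteEdges (↑F : Set (Sym2 V)) with hHdef
  apply hasFPM_of_hall
  intro Y
  by_contra hdef
  push_neg at hdef
  have huniv : ∀ Z : Finset V, Z.card ≤ n := by
    intro Z; rw [← hcard]; exact Finset.card_le_univ Z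
  have contra_small : ∀ Z : Finset V, Z.Nonempty →
      (Z.biUnion fun v => H.neighborFinset v).card < Z.card → 2*Z.card ≤ n+1 → False := by
    intro Z hZne hZdef hZs
    apply deficient_aux G F hF n d hcard h4 hdn hdeg hm Z hZne hZs
    intro v hv
    show (H.neighborSet v).ncard + 1 ≤ Z.card
    have hsub : H.neighborFinset v ⊆ Z.biUnion (fun v => H.neighborFinset v) :=
      Finset.subset_biUnion_of_mem (fun v => H.neighborFinset v) hv
    have hle := Finset.card_le_card hsub
    have := hncard_aux H v
    omega
  have shrink : ∀ Z : Finset V, (Z.biUnion fun v => H.neighborFinset v).card < Z.card →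
      ∃ Z1 : Finset V, Z1.Nonempty ∧
        (Z1.biUnion fun v => H.neighborFinset v).card < Z1.card ∧
        Z1.card = (Z.biUnion fun v => H.neighborFinset v).card + 1 := by
    intro Z h
    obtain ⟨Z1, hsub, hcard1⟩ := Finset.exists_subset_card_eq
      (show (Z.biUnion fun v => H.neighborFinset v).card + 1 ≤ Z.card from h)
    have hmono : Z1.biUnion (fun v => H.neighborFinset v)
        ⊆ Z.biUnion (fun v => H.neighborFinset v) :=
      Finset.biUnion_subset_biUnion_of_subset_left _ hsub
    have hle := Finset.card_le_card hmono
    exact ⟨Z1, by rw [← Finset.card_pos, hcard1]; omega, by omega, hcard1⟩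
  obtain ⟨Z1, hZ1ne, hZ1def, hZ1card⟩ := shrink Y hdef
  set z := (Y.biUnion fun v => H.neighborFinset v).card with hz
  by_cases hsmall : 2*(z+1) ≤ n+1
  · exact contra_small Z1 hZ1ne hZ1def (by omega)
  · set Y' := (Y.biUnion fun v => H.neighborFinset v)ᶜ with hY'
    have hY'card : Y'.card + z = n := by
      rw [hY', Finset.card_compl, hcard]
      have : z ≤ n := by rw [hz, ← hcard]; exact Finset.card_le_univ _
      omega
    have hNY' : (Y'.biUnion fun v => H.neighborFinset v) ⊆ Yᶜ := by
      intro w hw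
      obtain ⟨v, hvY', hvw⟩ := Finset.mem_biUnion.mp hw
      rw [Finset.mem_compl]
      intro hwY
      rw [hY', Finset.mem_compl] at hvY'
      apply hvY'
      refine Finset.mem_biUnion.mpr ⟨w, hwY, ?_⟩
      rw [SimpleGraph.mem_neighborFinset] at hvw ⊢
      exact hvw.symm
    have hNY'card : (Y'.biUnion fun v => H.neighborFinset v).card + Y.card ≤ n := by
      have h2 := Finset.card_le_card hNY'
      rw [Finset.card_compl, hcard] at h2
      have := huniv Y
      omega
    have hY'def : (Y'.biUnion fun v => H.neighborFinset v).card < Y'.card := by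
      have h1 := huniv Y
      omega
    obtain ⟨Z2, hZ2ne, hZ2def, hZ2card⟩ := shrink Y' hY'def
    apply contra_small Z2 hZ2ne hZ2def
    have h1 := huniv Y
    omega

lemma noFPM_isolated [Fintype V] [DecidableEq V] (H : SimpleGraph V) (v : V)
    (h : ∀ w, ¬ H.Adj v w) : ¬ H.HasFPM := by
  rintro ⟨f, _, h0, hs⟩
  have h1 := hs v
  have h2 : ∑ e ∈ Finset.univ.filter (fun e : Sym2 V => v ∈ e), f e = 0 := by
    apply Finset.sum_eq_zero
    intro e he
    rw [Finset.mem_filter] at he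
    apply h0
    intro hmem
    induction e using Sym2.ind with
    | _ x y =>
      rw [SimpleGraph.mem_edgeSet] at hmem
      rcases Sym2.mem_iff.mp he.2 with rfl | rfl
      · exact h y hmem
      · exact h x hmem.symm
  rw [h2] at h1
  exact one_ne_zero h1.symm

lemma exists_precl [Fintype V] [DecidableEq V] [Nonempty V] (G : SimpleGraph V) :
    ∃ F : Finset (Sym2 V), ↑F ⊆ G.edgeSet ∧ F.card = G.minDeg ∧
      ¬ (G.deleteEdges (↑F : Set (Sym2 V))).HasFPM := by
  classical
  have hne : {d | ∃ v : V, (G.neighborSet v).ncard = d}.Nonempty :=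
    ⟨_, Classical.arbitrary V, rfl⟩
  obtain ⟨v, hv⟩ := Nat.sInf_mem hne
  refine ⟨G.incidenceFinset v, ?_, ?_, ?_⟩
  · intro e he
    rw [Finset.mem_coe, SimpleGraph.mem_incidenceFinset] at he
    exact G.incidenceSet_subset v he
  · rw [SimpleGraph.card_incidenceFinset_eq_degree, SimpleGraph.minDeg, ← hv,
      hncard_aux]
    rfl
  · apply noFPM_isolated _ v
    intro w hadj
    rw [SimpleGraph.deleteEdges_adj] at hadj
    apply hadj.2
    rw [Finset.mem_coe, SimpleGraph.mem_incidenceFinset]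
    exact (SimpleGraph.mem_incidenceSet G v w).mpr hadj.1

theorem fmp_odd_order [Fintype V] [DecidableEq V] (G : SimpleGraph V) (n k : ℕ)
    (hk : 1 ≤ k) (hcard : Fintype.card V = n) (hodd : Odd n) (hn : 4 * k + 5 ≤ n) :
    G.fmp = n - k ↔ G.minDeg = n - k := by
  classical
  have hVne : Nonempty V := by
    rw [← Fintype.card_pos_iff, hcard]; omega
  obtain ⟨F0, hF0sub, hF0card, hF0n⟩ := exists_precl G
  have hSne : {c | ∃ F : Finset (Sym2 V), ↑F ⊆ G.edgeSet ∧ F.card = c ∧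
      ¬ (G.deleteEdges ↑F).HasFPM}.Nonempty := ⟨G.minDeg, F0, hF0sub, hF0card, hF0n⟩
  have hfmp_le : G.fmp ≤ G.minDeg := Nat.sInf_le ⟨F0, hF0sub, hF0card, hF0n⟩
  have hmin_le : ∀ v : V, G.minDeg ≤ (G.neighborSet v).ncard :=
    fun v => Nat.sInf_le ⟨v, rfl⟩
  have hmin_lt : G.minDeg + 1 ≤ n := by
    obtain ⟨v, hv⟩ := Nat.sInf_mem (⟨_, Classical.arbitrary V, rfl⟩ :
      {d | ∃ v : V, (G.neighborSet v).ncard = d}.Nonempty)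
    have h2 : (G.neighborSet v).ncard < n := by
      rw [hncard_aux, ← hcard]
      exact G.degree_lt_card_verts v
    have : G.minDeg = (G.neighborSet v).ncard := hv.symm
    omega
  have hlow : ∀ j : ℕ, 1 ≤ j → 4*j+5 ≤ n → n - j ≤ G.minDeg → n - j ≤ G.fmp := by
    intro j hj hjn hjd
    by_contra hlt
    push_neg at hlt
    obtain ⟨F, hFsub, hFcard, hFn⟩ := Nat.sInf_mem hSne
    have hFcard' : F.card = G.fmp := hFcard
    apply hFn
    apply fpm_delete G n (n - j) hcard (by omega) (by omega)
      (fun v => le_trans hjd (hmin_le v)) F hFsub (by omega)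

  constructor
  · intro hf
    rw [hf] at hfmp_le
    by_contra hne'
    have h1 : n - k + 1 ≤ G.minDeg := by
      rcases lt_or_eq_of_le hfmp_le with h | h
      · omega
      · exact absurd h.symm hne'
    have hk2 : 2 ≤ k := by omega
    have h2 := hlow (k-1) (by omega) (by omega) (by omega)
    rw [hf] at h2
    omega
  · intro hd
    have h2 := hlow k hk hn (le_of_eq hd.symm)
    rw [hd] at hfmp_le
    omega
end

section
/- Let n ≥ 3 be an odd positive integer. Then (1) s(n,0) = 0, i.e., the minimum number of edges of a graph of order n with fractional matching preclusion number 0 is 0; and (2) s(n,1) = (n+3)/2, i.e., the minimum number of edges of a graph of order n with fractional matching preclusion number 1 is (n+3)/2. -/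
open Finset

variable {V : Type*}

set_option linter.unusedSectionVars false

section aux
variable [Fintype V] [DecidableEq V] {G : SimpleGraph V} {f : Sym2 V → ℝ}

lemma fpm_forced (hf : G.IsFracPerfectMatching f) {a : V} {e0 : Sym2 V} (hae : a ∈ e0)
    (h : ∀ e ∈ G.edgeSet, a ∈ e → e = e0) : f e0 = 1 := by
  have hs := hf.2.2 a
  rw [Finset.sum_eq_single e0] at hs
  · exact hs
  · intro b hb hbne
    by_contra hfb
    have hbE : b ∈ G.edgeSet := by by_contra hbe; exact hfb (hf.2.1 b hbe)
    exact hbne (h b hbE (by simpa using hb))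
  · intro h0; exact absurd (Finset.mem_filter.2 ⟨Finset.mem_univ e0, hae⟩) h0

lemma fpm_two (hf : G.IsFracPerfectMatching f) {c : V} {e1 e2 : Sym2 V} (hne : e1 ≠ e2)
    (h1 : c ∈ e1) (h2 : c ∈ e2) (hf1 : f e1 = 1) (hf2 : f e2 = 1) : False := by
  have hs := hf.2.2 c
  have hsub : ({e1, e2} : Finset (Sym2 V)) ⊆ univ.filter (fun e => c ∈ e) := by
    intro e he
    simp only [Finset.mem_insert, Finset.mem_singleton] at he
    rcases he with rfl | rfl <;> simp [h1, h2]
  have hle := Finset.sum_le_sum_of_subset_of_nonneg hsub (fun e _ _ => (hf.1 e).1)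
  rw [Finset.sum_pair hne, hf1, hf2, hs] at hle
  linarith

lemma sym2_filter_card (e : Sym2 V) (h : ¬ e.IsDiag) :
    (univ.filter (fun v => v ∈ e)).card = 2 := by
  induction e with
  | _ x y =>
    have hxy : x ≠ y := by simpa [Sym2.isDiag_iff_proj_eq] using h
    have : univ.filter (fun v => v ∈ s(x,y)) = {x, y} := by
      ext v; simp [Sym2.mem_iff]
    rw [this, Finset.card_pair hxy]

lemma fpm_count [DecidableRel G.Adj] (hf : G.IsFracPerfectMatching f) :
    (Fintype.card V : ℝ) = 2 * ∑ e ∈ G.edgeFinset, f e := by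
  calc (Fintype.card V : ℝ) = ∑ _v : V, (1:ℝ) := by simp
  _ = ∑ v : V, ∑ e ∈ univ.filter (fun e : Sym2 V => v ∈ e), f e := by
      exact Finset.sum_congr rfl fun v _ => (hf.2.2 v).symm
  _ = ∑ v : V, ∑ e : Sym2 V, if v ∈ e then f e else 0 := by
      exact Finset.sum_congr rfl fun v _ => (Finset.sum_filter _ _)
  _ = ∑ e : Sym2 V, ∑ v : V, if v ∈ e then f e else 0 := Finset.sum_comm
  _ = ∑ e : Sym2 V, ((univ.filter (fun v => v ∈ e)).card : ℝ) * f e := by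
      refine Finset.sum_congr rfl fun e _ => ?_
      rw [← Finset.sum_filter, Finset.sum_const, nsmul_eq_mul]
  _ = ∑ e ∈ G.edgeFinset, ((univ.filter (fun v => v ∈ e)).card : ℝ) * f e := by
      refine (Finset.sum_subset (Finset.subset_univ _) ?_).symm
      intro e _ he
      rw [hf.2.1 e (by simpa [SimpleGraph.mem_edgeFinset] using he), mul_zero]
  _ = ∑ e ∈ G.edgeFinset, 2 * f e := by
      refine Finset.sum_congr rfl fun e he => ?_
      rw [sym2_filter_card e (G.not_isDiag_of_mem_edgeSet (SimpleGraph.mem_edgeFinset.1 he))]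
      norm_num
  _ = 2 * ∑ e ∈ G.edgeFinset, f e := by rw [Finset.mul_sum]

lemma fpm_deg_pos [DecidableRel G.Adj] (hf : G.IsFracPerfectMatching f) (v : V) :
    0 < G.degree v := by
  by_contra h
  have hs := hf.2.2 v
  have hz : ∀ e ∈ univ.filter (fun e : Sym2 V => v ∈ e), f e = 0 := by
    intro e he
    by_contra hfe
    have heE : e ∈ G.edgeSet := by by_contra h'; exact hfe (hf.2.1 e h')
    have hv : v ∈ e := (Finset.mem_filter.1 he).2
    have hsp := Sym2.other_spec hv
    rw [← hsp] at heE
    have : Sym2.Mem.other hv ∈ G.neighborFinset v := (G.mem_neighborFinset v _).2 heE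
    have := Finset.card_pos.2 ⟨_, this⟩
    exact h this
  rw [Finset.sum_eq_zero hz] at hs
  norm_num at hs

lemma only_edge [DecidableRel G.Adj] {a w : V} (hdeg : G.degree a = 1) (hw : G.Adj a w) :
    ∀ e ∈ G.edgeSet, a ∈ e → e = s(a, w) := by
  have hN : G.neighborFinset a = {w} := by
    obtain ⟨x, hx⟩ := Finset.card_eq_one.1 hdeg
    have hwmem : w ∈ G.neighborFinset a := (G.mem_neighborFinset a w).2 hw
    rw [hx] at hwmem ⊢
    simp only [Finset.mem_singleton] at hwmem
    rw [hwmem]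
  intro e he hae
  have hsp := Sym2.other_spec hae
  have hadj : G.Adj a (Sym2.Mem.other hae) := by rw [← hsp] at he; exact he
  have : Sym2.Mem.other hae ∈ G.neighborFinset a := (G.mem_neighborFinset a _).2 hadj
  rw [hN, Finset.mem_singleton] at this
  rw [← hsp, this]

end aux

set_option linter.unusedSectionVars false

lemma fpm_lower [Fintype V] [DecidableEq V] {G : SimpleGraph V}
    (hodd : Odd (Fintype.card V)) (hfpm : G.HasFPM) :
    Fintype.card V + 3 ≤ 2 * G.edgeSet.ncard := by
  classical
  obtain ⟨f, hf⟩ := hfpm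
  have hEcard : G.edgeSet.ncard = G.edgeFinset.card := by
    rw [Set.ncard_eq_toFinset_card']
    congr 1
  rw [hEcard]
  set N := Fintype.card V with hN
  set E := G.edgeFinset.card with hE
  have hcount : (N:ℝ) = 2 * ∑ e ∈ G.edgeFinset, f e := fpm_count hf
  have hub : ∑ e ∈ G.edgeFinset, f e ≤ (E : ℝ) := by
    calc ∑ e ∈ G.edgeFinset, f e ≤ ∑ _e ∈ G.edgeFinset, (1:ℝ) :=
      Finset.sum_le_sum (fun e _ => (hf.1 e).2)
    _ = (E:ℝ) := by simp [hE]
  have hNle : N ≤ 2 * E := by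
    have : (N:ℝ) ≤ 2 * (E:ℝ) := by rw [hcount]; linarith
    exact_mod_cast this
  have hne : 2 * E ≠ N + 1 := by
    intro hEq
    have hdegsum : ∑ v : V, G.degree v = N + 1 := by
      rw [SimpleGraph.sum_degrees_eq_twice_card_edges]; exact hEq
    have hdpos : ∀ v, 1 ≤ G.degree v := fun v => fpm_deg_pos hf v
    have hwex : ∃ w, 2 ≤ G.degree w := by
      by_contra hall; push_neg at hall
      have h1 : ∑ v : V, G.degree v ≤ ∑ _v : V, 1 :=
        Finset.sum_le_sum (fun v _ => by have := hall v; omega)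
      simp only [Finset.sum_const, Finset.card_univ, smul_eq_mul, mul_one] at h1
      omega
    obtain ⟨w, hw2⟩ := hwex
    have hdeg1 : ∀ v, v ≠ w → G.degree v = 1 := by
      intro v hvw
      have hsplit : ∑ u ∈ (Finset.univ \ {w, v}), G.degree u
          + ∑ u ∈ ({w, v} : Finset V), G.degree u = ∑ u : V, G.degree u :=
        Finset.sum_sdiff (Finset.subset_univ _)
      have hpair : ∑ u ∈ ({w, v} : Finset V), G.degree u = G.degree w + G.degree v :=
        Finset.sum_pair (Ne.symm hvw)
      have hcard2 : ({w, v} : Finset V).card = 2 := Finset.card_pair (Ne.symm hvw)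
      have hNge : 2 ≤ N := by
        have h2 := Finset.card_le_univ ({w, v} : Finset V)
        rw [hcard2] at h2
        show 2 ≤ Fintype.card V
        simpa using h2
      have hrest : (Finset.univ \ ({w, v} : Finset V)).card
          ≤ ∑ u ∈ (Finset.univ \ ({w, v} : Finset V)), G.degree u := by
        calc (Finset.univ \ ({w, v} : Finset V)).card
            = ∑ _u ∈ (Finset.univ \ ({w, v} : Finset V)), 1 := by simp
        _ ≤ _ := Finset.sum_le_sum (fun u _ => hdpos u)
      have hcardr : (Finset.univ \ ({w, v} : Finset V)).card = N - 2 := by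
        rw [Finset.card_sdiff_of_subset (Finset.subset_univ _), hcard2, Finset.card_univ]
      have := hdpos v
      omega
    obtain ⟨a, ha, b, hb, hab⟩ := Finset.one_lt_card.1
      (by have : G.degree w = (G.neighborFinset w).card := rfl; omega :
        1 < (G.neighborFinset w).card)
    have haw : G.Adj w a := (G.mem_neighborFinset w a).1 ha
    have hbw : G.Adj w b := (G.mem_neighborFinset w b).1 hb
    have hane : a ≠ w := fun h => G.irrefl (h ▸ haw)
    have hbne : b ≠ w := fun h => G.irrefl (h ▸ hbw)
    have hfa : f s(a, w) = 1 :=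
      fpm_forced hf (Sym2.mem_mk_left a w) (only_edge (hdeg1 a hane) haw.symm)
    have hfb : f s(b, w) = 1 :=
      fpm_forced hf (Sym2.mem_mk_left b w) (only_edge (hdeg1 b hbne) hbw.symm)
    have hne2 : s(a, w) ≠ s(b, w) := by
      intro h
      rcases Sym2.eq_iff.1 h with ⟨rfl, -⟩ | ⟨rfl, rfl⟩
      · exact hab rfl
      · exact hane rfl
    exact fpm_two hf hne2 (Sym2.mem_mk_right a w) (Sym2.mem_mk_right b w) hfa hfb
  obtain ⟨t, ht⟩ := hodd
  omega

namespace FMPaux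
open Finset

def vt (k i : ℕ) : Fin (2*k+3) := ⟨i % (2*k+3), Nat.mod_lt _ (by omega)⟩

lemma vt_val (k i : ℕ) (h : i < 2*k+3) : (vt k i).val = i := Nat.mod_eq_of_lt h

lemma eq_vt {k : ℕ} (v : Fin (2*k+3)) (i : ℕ) (h : i < 2*k+3) : v = vt k i ↔ v.val = i := by
  rw [Fin.ext_iff, vt_val k i h]

lemma mem_sym2_vt {k : ℕ} (v : Fin (2*k+3)) {a b : ℕ} (ha : a < 2*k+3) (hb : b < 2*k+3) :
    v ∈ s(vt k a, vt k b) ↔ v.val = a ∨ v.val = b := by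
  rw [Sym2.mem_iff, eq_vt v a ha, eq_vt v b hb]

lemma sym2_vt_eq {k : ℕ} {a b c d : ℕ} (ha : a < 2*k+3) (hb : b < 2*k+3)
    (hc : c < 2*k+3) (hd : d < 2*k+3) :
    s(vt k a, vt k b) = s(vt k c, vt k d) ↔ (a = c ∧ b = d) ∨ (a = d ∧ b = c) := by
  rw [Sym2.eq_iff]
  simp only [Fin.ext_iff, vt_val k a ha, vt_val k b hb, vt_val k c hc, vt_val k d hd]

def mE (k j : ℕ) : Sym2 (Fin (2*k+3)) := s(vt k (2*j+3), vt k (2*j+4))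

def myMatch (k : ℕ) : Finset (Sym2 (Fin (2*k+3))) := (Finset.range k).image (mE k)

def myT (k : ℕ) : Finset (Sym2 (Fin (2*k+3))) :=
  insert s(vt k 0, vt k 1) (insert s(vt k 0, vt k 2) (insert s(vt k 1, vt k 2) (myMatch k)))

lemma mem_myT {k : ℕ} {e : Sym2 (Fin (2*k+3))} :
    e ∈ myT k ↔ e = s(vt k 0, vt k 1) ∨ e = s(vt k 0, vt k 2) ∨ e = s(vt k 1, vt k 2) ∨
      ∃ j < k, e = mE k j := by
  simp only [myT, myMatch, Finset.mem_insert, Finset.mem_image, Finset.mem_range]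
  constructor
  · rintro (h|h|h|⟨j,hj,h⟩)
    · exact Or.inl h
    · exact Or.inr (Or.inl h)
    · exact Or.inr (Or.inr (Or.inl h))
    · exact Or.inr (Or.inr (Or.inr ⟨j, hj, h.symm⟩))
  · rintro (h|h|h|⟨j,hj,h⟩)
    · exact Or.inl h
    · exact Or.inr (Or.inl h)
    · exact Or.inr (Or.inr (Or.inl h))
    · exact Or.inr (Or.inr (Or.inr ⟨j, hj, h.symm⟩))

def myG (k : ℕ) : SimpleGraph (Fin (2*k+3)) := SimpleGraph.fromEdgeSet ↑(myT k)

lemma not_diag_myT {k : ℕ} {e : Sym2 (Fin (2*k+3))} (he : e ∈ myT k) : ¬ e.IsDiag := by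
  rcases mem_myT.1 he with h|h|h|⟨j,hj,h⟩ <;> subst h <;>
    (try rw [mE]) <;> rw [Sym2.mk_isDiag_iff] <;> rw [Fin.ext_iff]
  · rw [vt_val k 0 (by omega), vt_val k 1 (by omega)]; omega
  · rw [vt_val k 0 (by omega), vt_val k 2 (by omega)]; omega
  · rw [vt_val k 1 (by omega), vt_val k 2 (by omega)]; omega
  · rw [vt_val k (2*j+3) (by omega), vt_val k (2*j+4) (by omega)]; omega

lemma edgeSet_myG (k : ℕ) : (myG k).edgeSet = ↑(myT k) := by
  rw [myG, SimpleGraph.edgeSet_fromEdgeSet]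
  ext e
  simp only [Set.mem_diff, Finset.mem_coe, Set.mem_setOf_eq, and_iff_left_iff_imp]
  exact fun he => not_diag_myT he

lemma myT_card (k : ℕ) : (myT k).card = k + 3 := by
  have hmE : ∀ j, j < k → ∀ j', j' < k → mE k j = mE k j' → j = j' := by
    intro j hj j' hj' h
    rw [mE, mE, sym2_vt_eq (by omega) (by omega) (by omega) (by omega)] at h
    omega
  have hmc : (myMatch k).card = k := by
    rw [myMatch, Finset.card_image_of_injOn, Finset.card_range]
    intro j hj j' hj' h
    exact hmE j (Finset.mem_range.1 hj) j' (Finset.mem_range.1 hj') h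
  have h12 : s(vt k 1, vt k 2) ∉ myMatch k := by
    rw [myMatch]
    simp only [Finset.mem_image, Finset.mem_range, not_exists]
    rintro j ⟨hj, h⟩
    rw [mE, sym2_vt_eq (by omega) (by omega) (by omega) (by omega)] at h
    omega
  have h02 : s(vt k 0, vt k 2) ∉ insert s(vt k 1, vt k 2) (myMatch k) := by
    simp only [Finset.mem_insert, not_or]
    constructor
    · rw [sym2_vt_eq (by omega) (by omega) (by omega) (by omega)]; omega
    · rw [myMatch]
      simp only [Finset.mem_image, Finset.mem_range, not_exists]
      rintro j ⟨hj, h⟩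
      rw [mE, sym2_vt_eq (by omega) (by omega) (by omega) (by omega)] at h
      omega
  have h01 : s(vt k 0, vt k 1) ∉ insert s(vt k 0, vt k 2) (insert s(vt k 1, vt k 2) (myMatch k)) := by
    simp only [Finset.mem_insert, not_or]
    refine ⟨?_, ?_, ?_⟩
    · rw [sym2_vt_eq (by omega) (by omega) (by omega) (by omega)]; omega
    · rw [sym2_vt_eq (by omega) (by omega) (by omega) (by omega)]; omega
    · rw [myMatch]
      simp only [Finset.mem_image, Finset.mem_range, not_exists]
      rintro j ⟨hj, h⟩
      rw [mE, sym2_vt_eq (by omega) (by omega) (by omega) (by omega)] at h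
      omega
  rw [myT, Finset.card_insert_of_notMem h01, Finset.card_insert_of_notMem h02,
    Finset.card_insert_of_notMem h12, hmc]

end FMPaux

namespace FMPaux
open Finset

lemma sum_support {α : Type*} [Fintype α] [DecidableEq α] (f : α → ℝ) (T : Finset α)
    (h : ∀ e, e ∉ T → f e = 0) (p : α → Prop) [DecidablePred p] :
    ∑ e ∈ univ.filter p, f e = ∑ e ∈ T.filter p, f e := by
  refine (Finset.sum_subset (Finset.filter_subset_filter _ (Finset.subset_univ T)) ?_).symm
  intro x _ hx
  refine h x fun hxT => ?_
  have hpx : p x := by simpa using (Finset.mem_filter.1 (by assumption : x ∈ univ.filter p)).2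
  exact hx (Finset.mem_filter.2 ⟨hxT, hpx⟩)

noncomputable def myf (k : ℕ) (e : Sym2 (Fin (2*k+3))) : ℝ :=
  if e = s(vt k 0, vt k 1) ∨ e = s(vt k 0, vt k 2) ∨ e = s(vt k 1, vt k 2) then 1/2
  else if e ∈ myMatch k then 1 else 0

lemma myf_support {k : ℕ} : ∀ e, e ∉ myT k → myf k e = 0 := by
  intro e he
  rw [myf, if_neg, if_neg]
  · intro hm
    exact he (mem_myT.2 (by
      obtain ⟨j, hj, hje⟩ := Finset.mem_image.1 hm
      exact Or.inr (Or.inr (Or.inr ⟨j, Finset.mem_range.1 hj, hje.symm⟩))))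
  · rintro (h|h|h) <;> exact he (mem_myT.2 (by tauto))

lemma myf_tri01 (k : ℕ) : myf k s(vt k 0, vt k 1) = 1/2 := by rw [myf, if_pos (Or.inl rfl)]
lemma myf_tri02 (k : ℕ) : myf k s(vt k 0, vt k 2) = 1/2 := by
  rw [myf, if_pos (Or.inr (Or.inl rfl))]
lemma myf_tri12 (k : ℕ) : myf k s(vt k 1, vt k 2) = 1/2 := by
  rw [myf, if_pos (Or.inr (Or.inr rfl))]

lemma mE_ne_tri {k j : ℕ} (hj : j < k) :
    ¬ (mE k j = s(vt k 0, vt k 1) ∨ mE k j = s(vt k 0, vt k 2) ∨ mE k j = s(vt k 1, vt k 2)) := by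
  rintro (h|h|h) <;>
    (rw [mE, sym2_vt_eq (by omega) (by omega) (by omega) (by omega)] at h; omega)

lemma myf_mE {k j : ℕ} (hj : j < k) : myf k (mE k j) = 1 := by
  rw [myf, if_neg (mE_ne_tri hj), if_pos]
  exact Finset.mem_image.2 ⟨j, Finset.mem_range.2 hj, rfl⟩

lemma filt0 (k : ℕ) : (myT k).filter (fun e => vt k 0 ∈ e)
    = {s(vt k 0, vt k 1), s(vt k 0, vt k 2)} := by
  ext e
  simp only [Finset.mem_filter, Finset.mem_insert, Finset.mem_singleton]
  constructor
  · rintro ⟨hT, hv⟩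
    rcases mem_myT.1 hT with h|h|h|⟨j,hj,h⟩ <;> subst h
    · exact Or.inl rfl
    · exact Or.inr rfl
    · rw [mem_sym2_vt _ (by omega) (by omega), vt_val k 0 (by omega)] at hv; omega
    · rw [mE, mem_sym2_vt _ (by omega) (by omega), vt_val k 0 (by omega)] at hv; omega
  · rintro (rfl|rfl)
    · exact ⟨mem_myT.2 (Or.inl rfl), Sym2.mem_mk_left _ _⟩
    · exact ⟨mem_myT.2 (Or.inr (Or.inl rfl)), Sym2.mem_mk_left _ _⟩

lemma filt1 (k : ℕ) : (myT k).filter (fun e => vt k 1 ∈ e)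
    = {s(vt k 0, vt k 1), s(vt k 1, vt k 2)} := by
  ext e
  simp only [Finset.mem_filter, Finset.mem_insert, Finset.mem_singleton]
  constructor
  · rintro ⟨hT, hv⟩
    rcases mem_myT.1 hT with h|h|h|⟨j,hj,h⟩ <;> subst h
    · exact Or.inl rfl
    · rw [mem_sym2_vt _ (by omega) (by omega), vt_val k 1 (by omega)] at hv; omega
    · exact Or.inr rfl
    · rw [mE, mem_sym2_vt _ (by omega) (by omega), vt_val k 1 (by omega)] at hv; omega
  · rintro (rfl|rfl)
    · exact ⟨mem_myT.2 (Or.inl rfl), Sym2.mem_mk_right _ _⟩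
    · exact ⟨mem_myT.2 (Or.inr (Or.inr (Or.inl rfl))), Sym2.mem_mk_left _ _⟩

lemma filt2 (k : ℕ) : (myT k).filter (fun e => vt k 2 ∈ e)
    = {s(vt k 0, vt k 2), s(vt k 1, vt k 2)} := by
  ext e
  simp only [Finset.mem_filter, Finset.mem_insert, Finset.mem_singleton]
  constructor
  · rintro ⟨hT, hv⟩
    rcases mem_myT.1 hT with h|h|h|⟨j,hj,h⟩ <;> subst h
    · rw [mem_sym2_vt _ (by omega) (by omega), vt_val k 2 (by omega)] at hv; omega
    · exact Or.inl rfl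
    · exact Or.inr rfl
    · rw [mE, mem_sym2_vt _ (by omega) (by omega), vt_val k 2 (by omega)] at hv; omega
  · rintro (rfl|rfl)
    · exact ⟨mem_myT.2 (Or.inr (Or.inl rfl)), Sym2.mem_mk_right _ _⟩
    · exact ⟨mem_myT.2 (Or.inr (Or.inr (Or.inl rfl))), Sym2.mem_mk_right _ _⟩

lemma filt_big {k : ℕ} (v : Fin (2*k+3)) (h3 : 3 ≤ v.val) :
    (myT k).filter (fun e => v ∈ e) = {mE k ((v.val - 3)/2)} := by
  have hvlt : v.val < 2*k+3 := v.isLt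
  ext e
  simp only [Finset.mem_filter, Finset.mem_singleton]
  constructor
  · rintro ⟨hT, hv⟩
    rcases mem_myT.1 hT with h|h|h|⟨j,hj,h⟩ <;> subst h
    · rw [mem_sym2_vt _ (by omega) (by omega)] at hv; omega
    · rw [mem_sym2_vt _ (by omega) (by omega)] at hv; omega
    · rw [mem_sym2_vt _ (by omega) (by omega)] at hv; omega
    · rw [mE, mem_sym2_vt _ (by omega) (by omega)] at hv
      rw [show (v.val - 3)/2 = j by omega]
  · rintro rfl
    have hjk : (v.val - 3)/2 < k := by omega
    refine ⟨mem_myT.2 (Or.inr (Or.inr (Or.inr ⟨_, hjk, rfl⟩))), ?_⟩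
    rw [mE, mem_sym2_vt _ (by omega) (by omega)]
    omega

lemma myf_sum (k : ℕ) (v : Fin (2*k+3)) :
    ∑ e ∈ univ.filter (fun e : Sym2 (Fin (2*k+3)) => v ∈ e), myf k e = 1 := by
  rw [sum_support (myf k) (myT k) myf_support]
  have hvlt : v.val < 2*k+3 := v.isLt
  have hne01_02 : s(vt k 0, vt k 1) ≠ s(vt k 0, vt k 2) := by
    rw [Ne, sym2_vt_eq (by omega) (by omega) (by omega) (by omega)]; omega
  have hne01_12 : s(vt k 0, vt k 1) ≠ s(vt k 1, vt k 2) := by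
    rw [Ne, sym2_vt_eq (by omega) (by omega) (by omega) (by omega)]; omega
  have hne02_12 : s(vt k 0, vt k 2) ≠ s(vt k 1, vt k 2) := by
    rw [Ne, sym2_vt_eq (by omega) (by omega) (by omega) (by omega)]; omega
  rcases lt_or_ge v.val 3 with h3 | h3
  · interval_cases h : v.val
    · rw [show v = vt k 0 from (eq_vt v 0 (by omega)).2 h, filt0,
        Finset.sum_pair hne01_02, myf_tri01, myf_tri02]
      norm_num
    · rw [show v = vt k 1 from (eq_vt v 1 (by omega)).2 h, filt1,
        Finset.sum_pair hne01_12, myf_tri01, myf_tri12]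
      norm_num
    · rw [show v = vt k 2 from (eq_vt v 2 (by omega)).2 h, filt2,
        Finset.sum_pair hne02_12, myf_tri02, myf_tri12]
      norm_num
  · rw [filt_big v h3, Finset.sum_singleton, myf_mE (by omega : (v.val - 3)/2 < k)]

lemma hasFPM_myG (k : ℕ) : (myG k).HasFPM := by
  refine ⟨myf k, ?_, ?_, myf_sum k⟩
  · intro e
    rw [myf]
    split_ifs <;> norm_num
  · intro e he
    refine myf_support e fun hT => he ?_
    rw [edgeSet_myG]
    exact hT

end FMPaux

namespace FMPaux
open Finset

lemma no_fpm_del (k : ℕ) :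
    ¬ ((myG k).deleteEdges ↑({s(vt k 0, vt k 1)} : Finset (Sym2 (Fin (2*k+3))))).HasFPM := by
  rintro ⟨f, hf⟩
  set G' := (myG k).deleteEdges ↑({s(vt k 0, vt k 1)} : Finset (Sym2 (Fin (2*k+3)))) with hG'
  have hE' : G'.edgeSet = ↑(myT k) \ {s(vt k 0, vt k 1)} := by
    rw [hG', SimpleGraph.edgeSet_deleteEdges, edgeSet_myG, Finset.coe_singleton]
  have h0 : ∀ e ∈ G'.edgeSet, vt k 0 ∈ e → e = s(vt k 0, vt k 2) := by
    intro e he hv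
    rw [hE'] at he
    obtain ⟨heT, hens⟩ := he
    rcases mem_myT.1 heT with h|h|h|⟨j,hj,h⟩ <;> subst h
    · exact absurd rfl hens
    · rfl
    · rw [mem_sym2_vt _ (by omega) (by omega), vt_val k 0 (by omega)] at hv; omega
    · rw [mE, mem_sym2_vt _ (by omega) (by omega), vt_val k 0 (by omega)] at hv; omega
  have h1 : ∀ e ∈ G'.edgeSet, vt k 1 ∈ e → e = s(vt k 1, vt k 2) := by
    intro e he hv
    rw [hE'] at he
    obtain ⟨heT, hens⟩ := he
    rcases mem_myT.1 heT with h|h|h|⟨j,hj,h⟩ <;> subst h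
    · exact absurd rfl hens
    · rw [mem_sym2_vt _ (by omega) (by omega), vt_val k 1 (by omega)] at hv; omega
    · rfl
    · rw [mE, mem_sym2_vt _ (by omega) (by omega), vt_val k 1 (by omega)] at hv; omega
  have hf02 : f s(vt k 0, vt k 2) = 1 := fpm_forced hf (Sym2.mem_mk_left _ _) h0
  have hf12 : f s(vt k 1, vt k 2) = 1 := fpm_forced hf (Sym2.mem_mk_left _ _) h1
  have hne : s(vt k 0, vt k 2) ≠ s(vt k 1, vt k 2) := by
    rw [Ne, sym2_vt_eq (by omega) (by omega) (by omega) (by omega)]; omega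
  exact fpm_two hf hne (Sym2.mem_mk_right _ _) (Sym2.mem_mk_right _ _) hf02 hf12

lemma fmp_myG (k : ℕ) : (myG k).fmp = 1 := by
  set S := {m | ∃ F : Finset (Sym2 (Fin (2*k+3))), ↑F ⊆ (myG k).edgeSet ∧ F.card = m ∧
    ¬ ((myG k).deleteEdges ↑F).HasFPM} with hS
  have h1 : 1 ∈ S := by
    refine ⟨{s(vt k 0, vt k 1)}, ?_, Finset.card_singleton _, no_fpm_del k⟩
    rw [edgeSet_myG, Finset.coe_singleton, Set.singleton_subset_iff]
    exact mem_myT.2 (Or.inl rfl)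
  have h0 : 0 ∉ S := by
    rintro ⟨F, hsub, hc, hn⟩
    rw [Finset.card_eq_zero] at hc
    subst hc
    rw [Finset.coe_empty, SimpleGraph.deleteEdges_empty] at hn
    exact hn (hasFPM_myG k)
  have hle : sInf S ≤ 1 := Nat.sInf_le h1
  have hmem : sInf S ∈ S := Nat.sInf_mem ⟨1, h1⟩
  have hne0 : sInf S ≠ 0 := fun h => h0 (h ▸ hmem)
  show sInf S = 1
  omega

lemma hasFPM_of_fmp_one {V : Type*} [Fintype V] [DecidableEq V] {G : SimpleGraph V}
    (h : G.fmp = 1) : G.HasFPM := by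
  by_contra hn
  have h0 : (0 : ℕ) ∈ {m | ∃ F : Finset (Sym2 V), ↑F ⊆ G.edgeSet ∧ F.card = m ∧
      ¬ (G.deleteEdges ↑F).HasFPM} := by
    refine ⟨∅, by simp, Finset.card_empty, ?_⟩
    rw [Finset.coe_empty, SimpleGraph.deleteEdges_empty]
    exact hn
  have := Nat.sInf_le h0
  rw [SimpleGraph.fmp] at h
  omega

end FMPaux

namespace FMPaux
open Finset

lemma fmp_bot_zero {V : Type*} [Fintype V] [DecidableEq V] [Nonempty V] :
    (⊥ : SimpleGraph V).fmp = 0 := by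
  rw [SimpleGraph.fmp, Nat.sInf_eq_zero]
  left
  refine ⟨∅, by simp, Finset.card_empty, ?_⟩
  rintro ⟨f, hf⟩
  obtain ⟨v⟩ := ‹Nonempty V›
  have hs := hf.2.2 v
  rw [Finset.sum_eq_zero] at hs
  · norm_num at hs
  · intro e _
    refine hf.2.1 e ?_
    rw [SimpleGraph.edgeSet_deleteEdges, SimpleGraph.edgeSet_bot]
    simp

end FMPaux

theorem s_n_zero_and_one (n : ℕ) (hn : 3 ≤ n) (hodd : Odd n) :
    IsLeast {m : ℕ | ∃ G : SimpleGraph (Fin n), G.fmp = 0 ∧ G.edgeSet.ncard = m} 0 ∧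
    ∃ m : ℕ, 2 * m = n + 3 ∧
      IsLeast {m : ℕ | ∃ G : SimpleGraph (Fin n), G.fmp = 1 ∧ G.edgeSet.ncard = m} m := by
  obtain ⟨k, hk⟩ : ∃ k, n = 2*k+3 := by
    obtain ⟨t, ht⟩ := hodd
    exact ⟨t - 1, by omega⟩
  subst hk
  constructor
  · constructor
    · refine ⟨⊥, ?_, ?_⟩
      · have : Nonempty (Fin (2*k+3)) := ⟨⟨0, by omega⟩⟩
        exact FMPaux.fmp_bot_zero
      · rw [SimpleGraph.edgeSet_bot, Set.ncard_empty]
    · intro m _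
      exact Nat.zero_le m
  · refine ⟨k + 3, by omega, ?_, ?_⟩
    · refine ⟨FMPaux.myG k, FMPaux.fmp_myG k, ?_⟩
      rw [FMPaux.edgeSet_myG, Set.ncard_coe_finset, FMPaux.myT_card]
    · rintro m ⟨G, hG1, hG2⟩
      have hcard : Fintype.card (Fin (2*k+3)) = 2*k+3 := Fintype.card_fin _
      have hlow := fpm_lower (G := G) (by rw [hcard]; exact ⟨k+1, by omega⟩)
        (FMPaux.hasFPM_of_fmp_one hG1)
      rw [hcard, hG2] at hlow
      omega
end
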